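/- arXiv:1611.00965 — 5 statements merged into one kernel-verified Lean document; each statement's English description precedes it below -/
import Mathlib

section
/- If n ≥ 2p, then for every w ∈ ℝⁿ and every φ = (φ₁,…,φ_p) ∈ ℝᵖ, the Champernowne quadratic form equals the Zinde-Walsh quadratic form: βᵀ D β = wᵀ (Γ̇ₙ − Ω) w, where β = (−1, φ₁, …, φ_p) ∈ ℝ^{p+1}. -/
open Matrix Finset

/-- `c₀ = 1` and `c_l = −φ_l` for `l ≥ 1`. -/
noncomputable def cCoef (φ : ℕ → ℝ) (l : ℕ) : ℝ := if l = 0 then 1 else -φ l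

/-- Autocovariances of `u_t = φ(B)a_t`:
`γ_k^{(u)} = Σ_{l=0}^{p−k} c_l c_{l+k}` for `0 ≤ k ≤ p`, and `0` for `k > p`. -/
noncomputable def gammaU (p : ℕ) (φ : ℕ → ℝ) (k : ℕ) : ℝ :=
  if k ≤ p then ∑ l ∈ Finset.range (p - k + 1), cCoef φ l * cCoef φ (l + k) else 0

/-- The `n×n` symmetric Toeplitz matrix `Γ̇ₙ` with `(i,j)`-entry `γ_{|i−j|}^{(u)}`
(1-based indices of the paper correspond to `Fin` values plus one). -/
noncomputable def GammaDot (n p : ℕ) (φ : ℕ → ℝ) : Matrix (Fin n) (Fin n) ℝ :=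
  Matrix.of fun i j => gammaU p φ (Nat.dist i.val j.val)

/-- Corner entries: `Ω_{i,j} = Σ_{k=min(i,j)}^{p−|i−j|} φ_k φ_{k+|i−j|}`
for 1-based `i, j` (an empty sum being `0`). -/
noncomputable def OmegaEntry (p : ℕ) (φ : ℕ → ℝ) (i j : ℕ) : ℝ :=
  ∑ k ∈ Finset.Icc (min i j) (p - Nat.dist i j), φ k * φ (k + Nat.dist i j)

/-- The matrix `Ω`: zero except for the `p×p` block `Ω_{i,j}` in the upper-left corner
and its mirror image `Ω_{n+1−i,n+1−j} = Ω_{i,j}` in the lower-right corner.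
(For `n ≥ 2p` the two corner blocks are disjoint.) -/
noncomputable def OmegaMat (n p : ℕ) (φ : ℕ → ℝ) : Matrix (Fin n) (Fin n) ℝ :=
  Matrix.of fun i j =>
    (if i.val + 1 ≤ p ∧ j.val + 1 ≤ p then OmegaEntry p φ (i.val + 1) (j.val + 1) else 0) +
    (if n ≤ i.val + p ∧ n ≤ j.val + p then OmegaEntry p φ (n - i.val) (n - j.val) else 0)

/-- The Champernowne matrix: the `(p+1)×(p+1)` matrix with (1-based) `(i,j)`-entry
`D_{i,j} = Σ_{t=0}^{n+1−i−j} w_{i+t} w_{j+t}` (an empty sum being `0`). -/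
noncomputable def champD (n p : ℕ) (w : ℕ → ℝ) : Matrix (Fin (p + 1)) (Fin (p + 1)) ℝ :=
  Matrix.of fun i j => ∑ t ∈ Finset.range (n + 2 - (i.val + 1) - (j.val + 1)),
    w (i.val + 1 + t) * w (j.val + 1 + t)

/-- The vector `β = (−1, φ₁, …, φ_p)`. -/
noncomputable def betaVec (p : ℕ) (φ : ℕ → ℝ) : Fin (p + 1) → ℝ :=
  fun i => if i.val = 0 then -1 else φ i.val

/- ### Auxiliary lemmas -/

lemma gamma_expand (p k : ℕ) (φ : ℕ → ℝ) :
    gammaU p φ k = ∑ a ∈ range (p+1), ∑ b ∈ range (p+1),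
      (if b = a + k then cCoef φ a * cCoef φ b else 0) := by
  have h1 : ∀ a : ℕ, (∑ b ∈ range (p+1), if b = a + k then cCoef φ a * cCoef φ b else 0)
      = if a + k ≤ p then cCoef φ a * cCoef φ (a+k) else 0 := by
    intro a
    rw [Finset.sum_ite_eq' (range (p+1)) (a+k) (fun b => cCoef φ a * cCoef φ b)]
    simp [Nat.lt_succ_iff]
  simp_rw [h1]
  by_cases hk : k ≤ p
  · rw [gammaU, if_pos hk]
    symm
    rw [← Finset.sum_subset (Finset.range_subset_range.2 (show p - k + 1 ≤ p + 1 by omega))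
      (fun x hx hx' => by simp only [mem_range] at hx hx'; rw [if_neg (by omega)])]
    exact Finset.sum_congr rfl fun a ha => by
      simp only [mem_range] at ha; rw [if_pos (by omega)]
  · rw [gammaU, if_neg hk]
    exact (Finset.sum_eq_zero fun a ha => by
      simp only [mem_range] at ha; rw [if_neg (by omega)]).symm

lemma gamma_dist (p : ℕ) (φ : ℕ → ℝ) (s u : ℕ) :
    gammaU p φ (Nat.dist s u) = ∑ a ∈ range (p+1), ∑ b ∈ range (p+1),
      (if s + b = u + a then cCoef φ a * cCoef φ b else 0) := by
  rcases le_total s u with h | h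
  · rw [Nat.dist_eq_sub_of_le h, gamma_expand]
    exact Finset.sum_congr rfl fun a _ => Finset.sum_congr rfl fun b _ => by
      congr 1; simp only [eq_iff_iff]; omega
  · rw [Nat.dist_eq_sub_of_le_right h, gamma_expand, Finset.sum_comm]
    exact Finset.sum_congr rfl fun b _ => Finset.sum_congr rfl fun a _ => by
      by_cases he : b = a + (s - u)
      · rw [if_pos he, if_pos (by omega), mul_comm]
      · rw [if_neg he, if_neg (by omega)]

lemma diag_sum (w : ℕ → ℝ) (a b n : ℕ) (ha : a ≤ n) (hb : b ≤ n) :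
    (∑ i ∈ range n, ∑ j ∈ range n, (if i + b = j + a then w (i+1) * w (j+1) else 0))
    = ∑ r ∈ range (n - Nat.dist a b),
        w (a - min a b + 1 + r) * w (b - min a b + 1 + r) := by
  rw [← Finset.sum_product', ← Finset.sum_filter]
  refine Finset.sum_nbij' (fun x => x.1 - (a - min a b))
    (fun r => (a - min a b + r, b - min a b + r)) ?_ ?_ ?_ ?_ ?_
  · rintro ⟨i, j⟩ hx
    simp only [mem_filter, mem_product, mem_range, Nat.dist] at hx ⊢
    omega
  · intro r hr
    simp only [mem_filter, mem_product, mem_range, Nat.dist] at hr ⊢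
    omega
  · rintro ⟨i, j⟩ hx
    simp only [mem_filter, mem_product, mem_range, Nat.dist] at hx ⊢
    obtain ⟨⟨hi, hj⟩, hij⟩ := hx
    ext <;> simp <;> omega
  · intro r hr
    simp only [mem_range, Nat.dist] at hr
    dsimp only
    omega
  · rintro ⟨i, j⟩ hx
    simp only [mem_filter, mem_product, mem_range, Nat.dist] at hx
    obtain ⟨⟨hi, hj⟩, hij⟩ := hx
    have e1 : a - min a b + 1 + (i - (a - min a b)) = i + 1 := by omega
    have e2 : b - min a b + 1 + (i - (a - min a b)) = j + 1 := by omega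
    rw [e1, e2]

lemma corner1 (p : ℕ) (φ w : ℕ → ℝ) :
    (∑ i ∈ range p, ∑ j ∈ range p, OmegaEntry p φ (i+1) (j+1) * (w (i+1) * w (j+1)))
    = ∑ a ∈ range (p+1), ∑ b ∈ range (p+1), ∑ q ∈ range (min a b),
        φ a * φ b * (w (a - min a b + 1 + q) * w (b - min a b + 1 + q)) := by
  simp_rw [OmegaEntry, Finset.sum_mul]
  rw [← Finset.sum_product' (f := fun i j =>
      ∑ k ∈ Finset.Icc (min (i+1) (j+1)) (p - Nat.dist (i+1) (j+1)),
        φ k * φ (k + Nat.dist (i+1) (j+1)) * (w (i+1) * w (j+1))),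
    ← Finset.sum_product' (f := fun a b => ∑ q ∈ range (min a b),
        φ a * φ b * (w (a - min a b + 1 + q) * w (b - min a b + 1 + q))),
    Finset.sum_sigma', Finset.sum_sigma']
  refine Finset.sum_nbij'
    (fun x => ⟨(x.2 + (x.1.1 - min x.1.1 x.1.2), x.2 + (x.1.2 - min x.1.1 x.1.2)), min x.1.1 x.1.2⟩)
    (fun y => ⟨(y.1.1 - min y.1.1 y.1.2 + y.2, y.1.2 - min y.1.1 y.1.2 + y.2), min y.1.1 y.1.2⟩)
    ?_ ?_ ?_ ?_ ?_
  · rintro ⟨⟨i, j⟩, k⟩ hx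
    simp only [mem_sigma, mem_product, mem_range, mem_Icc, Nat.dist] at hx ⊢
    omega
  · rintro ⟨⟨a, b⟩, q⟩ hy
    simp only [mem_sigma, mem_product, mem_range, mem_Icc, Nat.dist] at hy ⊢
    omega
  · rintro ⟨⟨i, j⟩, k⟩ hx
    simp only [mem_sigma, mem_product, mem_range, mem_Icc, Nat.dist] at hx
    simp only [Sigma.mk.inj_iff, Prod.mk.injEq, heq_eq_eq]
    refine ⟨⟨by omega, by omega⟩, by omega⟩
  · rintro ⟨⟨a, b⟩, q⟩ hy
    simp only [mem_sigma, mem_product, mem_range, mem_Icc, Nat.dist] at hy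
    simp only [Sigma.mk.inj_iff, Prod.mk.injEq, heq_eq_eq]
    refine ⟨⟨by omega, by omega⟩, by omega⟩
  · rintro ⟨⟨i, j⟩, k⟩ hx
    simp only [mem_sigma, mem_product, mem_range, mem_Icc, Nat.dist] at hx
    dsimp only
    simp only [Nat.dist]
    rcases le_total i j with hij | hij
    · congr 1
      · congr 1 <;> congr 1 <;> omega
      · congr 1 <;> congr 1 <;> omega
    · rw [mul_comm (φ (k + (i - min i j))) (φ (k + (j - min i j)))]
      congr 1
      · congr 1 <;> congr 1 <;> omega
      · congr 1 <;> congr 1 <;> omega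

lemma corner2 (p n : ℕ) (hpn : p ≤ n) (φ w : ℕ → ℝ) :
    (∑ i ∈ range p, ∑ j ∈ range p, OmegaEntry p φ (i+1) (j+1) * (w (n-i) * w (n-j)))
    = ∑ a ∈ range (p+1), ∑ b ∈ range (p+1), ∑ q ∈ range (min a b),
        φ a * φ b * (w (n - b + 1 + q) * w (n - a + 1 + q)) := by
  simp_rw [OmegaEntry, Finset.sum_mul]
  rw [← Finset.sum_product' (f := fun i j =>
      ∑ k ∈ Finset.Icc (min (i+1) (j+1)) (p - Nat.dist (i+1) (j+1)),
        φ k * φ (k + Nat.dist (i+1) (j+1)) * (w (n-i) * w (n-j))),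
    ← Finset.sum_product' (f := fun a b => ∑ q ∈ range (min a b),
        φ a * φ b * (w (n - b + 1 + q) * w (n - a + 1 + q))),
    Finset.sum_sigma', Finset.sum_sigma']
  refine Finset.sum_nbij'
    (fun x => ⟨(x.1.2 + x.2 - min x.1.1 x.1.2, x.1.1 + x.2 - min x.1.1 x.1.2),
      x.2 - 1 - min x.1.1 x.1.2⟩)
    (fun y => ⟨(y.1.2 - 1 - y.2, y.1.1 - 1 - y.2), min y.1.1 y.1.2⟩)
    ?_ ?_ ?_ ?_ ?_
  · rintro ⟨⟨i, j⟩, k⟩ hx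
    simp only [mem_sigma, mem_product, mem_range, mem_Icc, Nat.dist] at hx ⊢
    omega
  · rintro ⟨⟨a, b⟩, q⟩ hy
    simp only [mem_sigma, mem_product, mem_range, mem_Icc, Nat.dist] at hy ⊢
    omega
  · rintro ⟨⟨i, j⟩, k⟩ hx
    simp only [mem_sigma, mem_product, mem_range, mem_Icc, Nat.dist] at hx
    simp only [Sigma.mk.inj_iff, Prod.mk.injEq, heq_eq_eq]
    refine ⟨⟨by omega, by omega⟩, by omega⟩
  · rintro ⟨⟨a, b⟩, q⟩ hy
    simp only [mem_sigma, mem_product, mem_range, mem_Icc, Nat.dist] at hy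
    simp only [Sigma.mk.inj_iff, Prod.mk.injEq, heq_eq_eq]
    refine ⟨⟨by omega, by omega⟩, by omega⟩
  · rintro ⟨⟨i, j⟩, k⟩ hx
    simp only [mem_sigma, mem_product, mem_range, mem_Icc, Nat.dist] at hx
    dsimp only
    simp only [Nat.dist]
    rcases le_total i j with hij | hij
    · rw [mul_comm (φ (j + k - min i j)) (φ (i + k - min i j))]
      congr 1
      · congr 1 <;> congr 1 <;> omega
      · congr 1 <;> congr 1 <;> omega
    · congr 1
      · congr 1 <;> congr 1 <;> omega
      · congr 1 <;> congr 1 <;> omega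

lemma fin_double_sum (m : ℕ) (F : ℕ → ℕ → ℝ) :
    (∑ i : Fin m, ∑ j : Fin m, F i.1 j.1) = ∑ i ∈ range m, ∑ j ∈ range m, F i j := by
  rw [Fin.sum_univ_eq_sum_range (fun i => ∑ j : Fin m, F i j.1)]
  exact Finset.sum_congr rfl fun i _ => Fin.sum_univ_eq_sum_range (fun j => F i j) m

lemma swap4 (s t : Finset ℕ) (F : ℕ → ℕ → ℕ → ℕ → ℝ) :
    (∑ i ∈ s, ∑ j ∈ s, ∑ a ∈ t, ∑ b ∈ t, F i j a b)
    = ∑ a ∈ t, ∑ b ∈ t, ∑ i ∈ s, ∑ j ∈ s, F i j a b := by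
  calc (∑ i ∈ s, ∑ j ∈ s, ∑ a ∈ t, ∑ b ∈ t, F i j a b)
      = ∑ i ∈ s, ∑ a ∈ t, ∑ j ∈ s, ∑ b ∈ t, F i j a b :=
        Finset.sum_congr rfl fun i _ => Finset.sum_comm
    _ = ∑ a ∈ t, ∑ i ∈ s, ∑ j ∈ s, ∑ b ∈ t, F i j a b := Finset.sum_comm
    _ = ∑ a ∈ t, ∑ i ∈ s, ∑ b ∈ t, ∑ j ∈ s, F i j a b :=
        Finset.sum_congr rfl fun a _ => Finset.sum_congr rfl fun i _ => Finset.sum_comm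
    _ = ∑ a ∈ t, ∑ b ∈ t, ∑ i ∈ s, ∑ j ∈ s, F i j a b :=
        Finset.sum_congr rfl fun a _ => Finset.sum_comm

lemma gamma_form (p n : ℕ) (hn : 2*p ≤ n) (φ w : ℕ → ℝ) :
    ((fun i : Fin n => w (i.val + 1)) ⬝ᵥ (GammaDot n p φ *ᵥ fun i : Fin n => w (i.val + 1)))
    = ∑ a ∈ range (p+1), ∑ b ∈ range (p+1), cCoef φ a * cCoef φ b *
        ∑ r ∈ range (n - Nat.dist a b),
          w (a - min a b + 1 + r) * w (b - min a b + 1 + r) := by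
  simp only [dotProduct, mulVec, GammaDot, Matrix.of_apply, Finset.mul_sum]
  rw [fin_double_sum n (fun i j => w (i+1) * (gammaU p φ (Nat.dist i j) * w (j+1)))]
  have h1 : ∀ i j : ℕ, w (i+1) * (gammaU p φ (Nat.dist i j) * w (j+1))
      = ∑ a ∈ range (p+1), ∑ b ∈ range (p+1),
          (if i + b = j + a then cCoef φ a * cCoef φ b * (w (i+1) * w (j+1)) else 0) := by
    intro i j
    rw [gamma_dist, Finset.sum_mul, Finset.mul_sum]
    refine Finset.sum_congr rfl fun a _ => ?_
    rw [Finset.sum_mul, Finset.mul_sum]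
    refine Finset.sum_congr rfl fun b _ => ?_
    by_cases hc : i + b = j + a
    · rw [if_pos hc, if_pos hc]; ring
    · rw [if_neg hc, if_neg hc]; ring
  simp_rw [h1]
  rw [swap4]
  refine Finset.sum_congr rfl fun a ha => Finset.sum_congr rfl fun b hb => ?_
  simp only [mem_range] at ha hb
  have := diag_sum w a b n (by omega) (by omega)
  rw [← Finset.mul_sum, ← this, Finset.mul_sum]
  refine Finset.sum_congr rfl fun i _ => ?_
  rw [Finset.mul_sum]
  refine Finset.sum_congr rfl fun j _ => ?_
  by_cases hc : i + b = j + a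
  · rw [if_pos hc, if_pos hc]
  · rw [if_neg hc, if_neg hc, mul_zero]

lemma omega_form (p n : ℕ) (hn : 2*p ≤ n) (φ w : ℕ → ℝ) :
    ((fun i : Fin n => w (i.val + 1)) ⬝ᵥ (OmegaMat n p φ *ᵥ fun i : Fin n => w (i.val + 1)))
    = (∑ i ∈ range p, ∑ j ∈ range p, OmegaEntry p φ (i+1) (j+1) * (w (i+1) * w (j+1)))
      + ∑ i ∈ range p, ∑ j ∈ range p, OmegaEntry p φ (i+1) (j+1) * (w (n-i) * w (n-j)) := by
  simp only [dotProduct, mulVec, OmegaMat, Matrix.of_apply, Finset.mul_sum]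
  rw [fin_double_sum n (fun i j => w (i+1) *
    (((if i + 1 ≤ p ∧ j + 1 ≤ p then OmegaEntry p φ (i+1) (j+1) else 0) +
      (if n ≤ i + p ∧ n ≤ j + p then OmegaEntry p φ (n-i) (n-j) else 0)) * w (j+1)))]
  simp_rw [add_mul, mul_add, Finset.sum_add_distrib]
  congr 1
  -- Part 1
  · calc (∑ i ∈ range n, ∑ j ∈ range n,
          w (i+1) * ((if i + 1 ≤ p ∧ j + 1 ≤ p then OmegaEntry p φ (i+1) (j+1) else 0) * w (j+1)))
        = ∑ i ∈ range p, ∑ j ∈ range n,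
          w (i+1) * ((if i + 1 ≤ p ∧ j + 1 ≤ p then OmegaEntry p φ (i+1) (j+1) else 0) * w (j+1)) := by
          refine (Finset.sum_subset (Finset.range_subset_range.2 (show p ≤ n by omega))
            fun i hi hi' => Finset.sum_eq_zero fun j _ => ?_).symm
          simp only [mem_range] at hi hi'
          rw [if_neg (by omega)]; ring
      _ = ∑ i ∈ range p, ∑ j ∈ range p,
          w (i+1) * ((if i + 1 ≤ p ∧ j + 1 ≤ p then OmegaEntry p φ (i+1) (j+1) else 0) * w (j+1)) := by
          refine Finset.sum_congr rfl fun i hi => (Finset.sum_subset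
            (Finset.range_subset_range.2 (show p ≤ n by omega)) fun j hj hj' => ?_).symm
          simp only [mem_range] at hj hj'
          rw [if_neg (by omega)]; ring
      _ = ∑ i ∈ range p, ∑ j ∈ range p, OmegaEntry p φ (i+1) (j+1) * (w (i+1) * w (j+1)) := by
          refine Finset.sum_congr rfl fun i hi => Finset.sum_congr rfl fun j hj => ?_
          simp only [mem_range] at hi hj
          rw [if_pos (by omega)]
          ring
  -- Part 2
  · simp_rw [ite_mul, zero_mul, mul_ite, mul_zero]
    rw [← Finset.sum_product' (f := fun i j => if n ≤ i + p ∧ n ≤ j + p then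
        w (i+1) * (OmegaEntry p φ (n-i) (n-j) * w (j+1)) else 0),
      ← Finset.sum_filter,
      ← Finset.sum_product' (f := fun i j => OmegaEntry p φ (i+1) (j+1) * (w (n-i) * w (n-j)))]
    refine Finset.sum_nbij' (fun x => (n-1-x.1, n-1-x.2)) (fun y => (n-1-y.1, n-1-y.2))
      ?_ ?_ ?_ ?_ ?_
    · rintro ⟨i, j⟩ hx
      simp only [mem_filter, mem_product, mem_range] at hx ⊢
      omega
    · rintro ⟨i, j⟩ hy
      simp only [mem_filter, mem_product, mem_range] at hy ⊢
      omega
    · rintro ⟨i, j⟩ hx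
      simp only [mem_filter, mem_product, mem_range] at hx
      simp only [Prod.mk.injEq]
      constructor <;> omega
    · rintro ⟨i, j⟩ hy
      simp only [mem_product, mem_range] at hy
      simp only [Prod.mk.injEq]
      constructor <;> omega
    · rintro ⟨i, j⟩ hx
      simp only [mem_filter, mem_product, mem_range] at hx
      dsimp only
      have e1 : n - 1 - i + 1 = n - i := by omega
      have e2 : n - 1 - j + 1 = n - j := by omega
      have e3 : n - (n - 1 - i) = i + 1 := by omega
      have e4 : n - (n - 1 - j) = j + 1 := by omega
      rw [e1, e2, e3, e4]
      ring

lemma champ_form (p n : ℕ) (hn : 2*p ≤ n) (φ w : ℕ → ℝ) :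
    betaVec p φ ⬝ᵥ (champD n p w *ᵥ betaVec p φ)
    = ∑ a ∈ range (p+1), ∑ b ∈ range (p+1), cCoef φ a * cCoef φ b *
        ∑ t ∈ range (n - a - b), w (a+1+t) * w (b+1+t) := by
  simp only [dotProduct, mulVec, champD, betaVec, Matrix.of_apply, Finset.mul_sum]
  rw [fin_double_sum (p+1) (fun a b => (if a = 0 then -1 else φ a) *
      ((∑ t ∈ range (n + 2 - (a+1) - (b+1)), w (a+1+t) * w (b+1+t)) *
        (if b = 0 then -1 else φ b)))]
  refine Finset.sum_congr rfl fun a ha => Finset.sum_congr rfl fun b hb => ?_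
  simp only [mem_range] at ha hb
  have hr : n + 2 - (a+1) - (b+1) = n - a - b := by omega
  rw [hr]
  have hca : (if a = 0 then (-1:ℝ) else φ a) = -cCoef φ a := by unfold cCoef; split <;> ring
  have hcb : (if b = 0 then (-1:ℝ) else φ b) = -cCoef φ b := by unfold cCoef; split <;> ring
  rw [hca, hcb, Finset.sum_mul, Finset.mul_sum]
  exact Finset.sum_congr rfl fun t _ => by ring

/-- If `n ≥ 2p`, then for every `w ∈ ℝⁿ` and every `φ ∈ ℝᵖ` the Champernowne
quadratic form equals the Zinde-Walsh quadratic form: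
`βᵀ D β = wᵀ (Γ̇ₙ − Ω) w` where `β = (−1, φ₁, …, φ_p)`. -/
theorem champernowne_eq_zindeWalsh (p n : ℕ) (hp : 1 ≤ p) (hn : 2 * p ≤ n)
    (φ w : ℕ → ℝ) :
    betaVec p φ ⬝ᵥ (champD n p w *ᵥ betaVec p φ) =
      (fun i : Fin n => w (i.val + 1)) ⬝ᵥ
        ((GammaDot n p φ - OmegaMat n p φ) *ᵥ fun i : Fin n => w (i.val + 1)) := by
  rw [Matrix.sub_mulVec, dotProduct_sub, gamma_form p n hn φ w, omega_form p n hn φ w,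
    corner1 p φ w, corner2 p n (by omega) φ w, champ_form p n hn φ w,
    ← Finset.sum_add_distrib, ← Finset.sum_sub_distrib]
  refine Finset.sum_congr rfl fun a ha => ?_
  rw [← Finset.sum_add_distrib, ← Finset.sum_sub_distrib]
  refine Finset.sum_congr rfl fun b hb => ?_
  simp only [mem_range] at ha hb
  -- rewrite the corner coefficients φ a * φ b into cCoef form and pull them out
  have hhead : (∑ q ∈ range (min a b),
      φ a * φ b * (w (a - min a b + 1 + q) * w (b - min a b + 1 + q)))
      = cCoef φ a * cCoef φ b * ∑ q ∈ range (min a b),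
          w (a - min a b + 1 + q) * w (b - min a b + 1 + q) := by
    rw [Finset.mul_sum]
    refine Finset.sum_congr rfl fun q hq => ?_
    simp only [mem_range] at hq
    unfold cCoef
    rw [if_neg (by omega), if_neg (by omega)]
    ring
  have htail : (∑ q ∈ range (min a b),
      φ a * φ b * (w (n - b + 1 + q) * w (n - a + 1 + q)))
      = cCoef φ a * cCoef φ b * ∑ q ∈ range (min a b),
          w (n - b + 1 + q) * w (n - a + 1 + q) := by
    rw [Finset.mul_sum]
    refine Finset.sum_congr rfl fun q hq => ?_
    simp only [mem_range] at hq
    unfold cCoef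
    rw [if_neg (by omega), if_neg (by omega)]
    ring
  rw [hhead, htail]
  -- split the Toeplitz diagonal sum into head, middle, tail
  have hsplit : n - Nat.dist a b = min a b + ((n - a - b) + min a b) := by
    simp only [Nat.dist]; omega
  rw [hsplit, Finset.sum_range_add, Finset.sum_range_add]
  have hD : (∑ t ∈ range (n - a - b),
      w (a - min a b + 1 + (min a b + t)) * w (b - min a b + 1 + (min a b + t)))
      = ∑ t ∈ range (n - a - b), w (a+1+t) * w (b+1+t) := by
    refine Finset.sum_congr rfl fun t _ => ?_
    congr 1 <;> congr 1 <;> omega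
  have hT : (∑ q ∈ range (min a b),
      w (a - min a b + 1 + (min a b + ((n - a - b) + q))) *
        w (b - min a b + 1 + (min a b + ((n - a - b) + q))))
      = ∑ q ∈ range (min a b), w (n - b + 1 + q) * w (n - a + 1 + q) := by
    refine Finset.sum_congr rfl fun q _ => ?_
    congr 1 <;> congr 1 <;> omega
  rw [hD, hT]
  ring
end

section
/- If p ≤ n < 2p, then the Champernowne identity fails: there exist φ ∈ ℝᵖ and w ∈ ℝⁿ such that βᵀ D β ≠ wᵀ (Γ̇ₙ − Ω) w, where β = (−1, φ₁, …, φ_p). Combined with the validity of the identity for n ≥ 2p, the identity βᵀ D β = wᵀ(Γ̇ₙ − Ω)w holds for all w and φ if and only if n ≥ 2p. -/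
open Matrix Finset

/- ### Auxiliary machinery -/

namespace Champ

noncomputable def Tsum (n : ℕ) (w : ℕ → ℝ) (k : ℕ) : ℝ :=
  ∑ s ∈ range (n - k), w (1 + s) * w (1 + k + s)

noncomputable def Fsum (w : ℕ → ℝ) (i j : ℕ) : ℝ :=
  ∑ r ∈ range (min i j), w (1 + (i - j) + r) * w (1 + (j - i) + r)

noncomputable def Bsum (n : ℕ) (w : ℕ → ℝ) (i j : ℕ) : ℝ :=
  ∑ r ∈ range (min i j), w (n - j + 1 + r) * w (n - i + 1 + r)

noncomputable def Dsum (n : ℕ) (w : ℕ → ℝ) (i j : ℕ) : ℝ :=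
  ∑ t ∈ range (n - i - j), w (i + 1 + t) * w (j + 1 + t)

lemma Fsum_comm (w : ℕ → ℝ) (i j : ℕ) : Fsum w i j = Fsum w j i := by
  unfold Fsum
  rw [min_comm]
  exact Finset.sum_congr rfl fun r _ => mul_comm _ _

lemma Bsum_comm (n : ℕ) (w : ℕ → ℝ) (i j : ℕ) : Bsum n w i j = Bsum n w j i := by
  unfold Bsum
  rw [min_comm]
  exact Finset.sum_congr rfl fun r _ => mul_comm _ _

lemma Dsum_comm (n : ℕ) (w : ℕ → ℝ) (i j : ℕ) : Dsum n w i j = Dsum n w j i := by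
  unfold Dsum
  have : n - i - j = n - j - i := by omega
  rw [this]
  exact Finset.sum_congr rfl fun r _ => mul_comm _ _

lemma OmegaEntry_comm (p : ℕ) (φ : ℕ → ℝ) (i j : ℕ) :
    OmegaEntry p φ i j = OmegaEntry p φ j i := by
  unfold OmegaEntry
  rw [Nat.dist_comm, min_comm]

lemma star_le (n : ℕ) (w : ℕ → ℝ) (i j : ℕ) (hij : i ≤ j) (hn : i + j ≤ n) :
    Tsum n w (Nat.dist i j) = Fsum w i j + Dsum n w i j + Bsum n w i j := by
  have hd : Nat.dist i j = j - i := Nat.dist_eq_sub_of_le hij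
  have e1 : ∑ s ∈ range i, w (1 + s) * w (1 + (j - i) + s) = Fsum w i j := by
    unfold Fsum
    rw [min_eq_left hij]
    refine Finset.sum_congr rfl fun r hr => ?_
    simp only [Finset.mem_range] at hr
    rw [show 1 + (i - j) + r = 1 + r by omega]
  have e2 : ∑ t ∈ range (n - i - j), w (1 + (i + t)) * w (1 + (j - i) + (i + t))
      = Dsum n w i j := by
    unfold Dsum
    refine Finset.sum_congr rfl fun t ht => ?_
    simp only [Finset.mem_range] at ht
    rw [show 1 + (i + t) = i + 1 + t by omega, show 1 + (j - i) + (i + t) = j + 1 + t by omega]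
  have e3 : ∑ r ∈ range i, w (1 + (i + (n - i - j + r))) * w (1 + (j - i) + (i + (n - i - j + r)))
      = Bsum n w i j := by
    unfold Bsum
    rw [min_eq_left hij]
    refine Finset.sum_congr rfl fun r hr => ?_
    simp only [Finset.mem_range] at hr
    rw [show 1 + (i + (n - i - j + r)) = n - j + 1 + r by omega,
      show 1 + (j - i) + (i + (n - i - j + r)) = n - i + 1 + r by omega]
  have hsplit : n - (j - i) = i + (n - i - j + i) := by omega
  unfold Tsum
  rw [hd, hsplit, Finset.sum_range_add, Finset.sum_range_add]
  
  rw [e1, e2, e3]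
  ring

/-- The key split of the Toeplitz inner sum into front / middle / back pieces. -/
lemma star (n : ℕ) (w : ℕ → ℝ) (i j : ℕ) (hn : i + j ≤ n) :
    Tsum n w (Nat.dist i j) = Fsum w i j + Dsum n w i j + Bsum n w i j := by
  rcases le_total i j with hij | hij
  · exact star_le n w i j hij hn
  · rw [Nat.dist_comm, Fsum_comm, Dsum_comm, Bsum_comm]
    exact star_le n w j i hij (by omega)

/-- Decomposition of a square double sum into diagonal and off-diagonal diagonals. -/
lemma decomp (m : ℕ) (H : ℕ → ℕ → ℝ) :
    ∑ i ∈ range m, ∑ j ∈ range m, H i j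
      = ∑ i ∈ range m, H i i
        + ∑ d ∈ Finset.Ico 1 m, ∑ i ∈ range (m - d), (H i (i + d) + H (i + d) i) := by
  induction m with
  | zero => simp
  | succ m ih =>
    rw [Finset.sum_range_succ]
    have e1 : ∀ i ∈ range m, ∑ j ∈ range (m + 1), H i j = ∑ j ∈ range m, H i j + H i m :=
      fun i _ => Finset.sum_range_succ _ m
    rw [Finset.sum_congr rfl e1, Finset.sum_add_distrib, ih,
      Finset.sum_range_succ (fun j => H m j) m, Finset.sum_range_succ (fun i => H i i) m]
    have key : ∑ d ∈ Finset.Ico 1 (m + 1), ∑ i ∈ range (m + 1 - d), (H i (i + d) + H (i + d) i)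
        = ∑ d ∈ Finset.Ico 1 m, ∑ i ∈ range (m - d), (H i (i + d) + H (i + d) i)
          + ∑ i ∈ range m, (H i m + H m i) := by
      have e2 : ∀ d ∈ Finset.Ico 1 (m + 1), ∑ i ∈ range (m + 1 - d), (H i (i + d) + H (i + d) i)
          = ∑ i ∈ range (m - d), (H i (i + d) + H (i + d) i) + (H (m - d) m + H m (m - d)) := by
        intro d hd
        simp only [Finset.mem_Ico] at hd
        have h0 : m + 1 - d = (m - d) + 1 := by omega
        rw [h0, Finset.sum_range_succ]
        have h1 : m - d + d = m := by omega
        rw [h1]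
      rw [Finset.sum_congr rfl e2, Finset.sum_add_distrib]
      congr 1
      · rcases Nat.eq_zero_or_pos m with hm | hm
        · subst hm; simp
        · rw [Finset.sum_Ico_succ_top (by omega : 1 ≤ m)]
          simp
      · rw [Finset.sum_Ico_eq_sum_range]
        have e3 : ∀ t ∈ range (m + 1 - 1),
            (H (m - (1 + t)) m + H m (m - (1 + t))) = (fun i => H i m + H m i) (m - 1 - t) := by
          intro t _
          simp only
          rw [show m - (1 + t) = m - 1 - t by omega]
        rw [Finset.sum_congr rfl e3, show m + 1 - 1 = m from rfl]
        exact Finset.sum_range_reflect (fun i => H i m + H m i) m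
    rw [key, Finset.sum_add_distrib]
    ring

/-- Triangular summation-by-parts. -/
lemma triangle (m : ℕ) (g h : ℕ → ℝ) :
    ∑ i ∈ range (m + 1), g i * ∑ r ∈ range i, h r
      = ∑ r ∈ range m, (∑ i ∈ Finset.Icc (r + 1) m, g i) * h r := by
  induction m with
  | zero => simp
  | succ m ih =>
    rw [Finset.sum_range_succ, ih]
    have e1 : ∀ r ∈ range m, (∑ i ∈ Finset.Icc (r + 1) (m + 1), g i) * h r
        = (∑ i ∈ Finset.Icc (r + 1) m, g i) * h r + g (m + 1) * h r := by
      intro r hr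
      simp only [Finset.mem_range] at hr
      rw [Finset.sum_Icc_succ_top (by omega : r + 1 ≤ m + 1)]
      ring
    rw [Finset.sum_range_succ (fun r => (∑ i ∈ Finset.Icc (r + 1) (m + 1), g i) * h r) m,
      Finset.sum_congr rfl e1, Finset.sum_add_distrib, Finset.Icc_self, Finset.sum_singleton,
      Finset.sum_range_succ h m]
    have : ∑ r ∈ range m, g (m + 1) * h r = g (m + 1) * ∑ r ∈ range m, h r := by
      rw [Finset.mul_sum]
    rw [this]
    ring

lemma dist_add (a d : ℕ) : Nat.dist a (a + d) = d := by simp [Nat.dist]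

lemma dist_add' (a d : ℕ) : Nat.dist (a + d) a = d := by simp [Nat.dist]

lemma gammaU_zero (p : ℕ) (φ : ℕ → ℝ) :
    gammaU p φ 0 = ∑ l ∈ range (p + 1), cCoef φ l * cCoef φ l := by
  unfold gammaU
  rw [if_pos (Nat.zero_le p)]
  simp

lemma gammaU_of_gt (p : ℕ) (φ : ℕ → ℝ) (d : ℕ) (h : p < d) : gammaU p φ d = 0 := by
  unfold gammaU
  rw [if_neg (by omega)]

lemma sum_ite_lt (p n : ℕ) (h : p ≤ n) (f : ℕ → ℝ) :
    ∑ a ∈ range n, (if a + 1 ≤ p then f a else 0) = ∑ a ∈ range p, f a := by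
  rw [← Finset.sum_filter]
  congr 1
  ext x
  simp only [Finset.mem_filter, Finset.mem_range]
  omega

lemma sum_ite_ge (p n : ℕ) (h : p ≤ n) (f : ℕ → ℝ) :
    ∑ a ∈ range n, (if n ≤ a + p then f a else 0) = ∑ a ∈ range p, f (n - p + a) := by
  rw [← Finset.sum_filter]
  have : Finset.filter (fun a => n ≤ a + p) (range n) = Finset.Ico (n - p) n := by
    ext x
    simp only [Finset.mem_filter, Finset.mem_range, Finset.mem_Ico]
    omega
  rw [this, Finset.sum_Ico_eq_sum_range]
  have hnp : n - (n - p) = p := by omega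
  rw [hnp]

/-- The Γ side as a double sum over `range (p+1)`. -/
lemma gamma_side (p n : ℕ) (hp : 1 ≤ p) (h2p : 2 * p ≤ n) (φ w : ℕ → ℝ) :
    ∑ a ∈ range n, ∑ b ∈ range n, gammaU p φ (Nat.dist a b) * (w (a + 1) * w (b + 1))
      = ∑ i ∈ range (p + 1), ∑ j ∈ range (p + 1),
          cCoef φ i * cCoef φ j * Tsum n w (Nat.dist i j) := by
  rw [decomp, decomp]
  have diagL : ∑ a ∈ range n, gammaU p φ (Nat.dist a a) * (w (a + 1) * w (a + 1))
      = gammaU p φ 0 * Tsum n w 0 := by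
    unfold Tsum
    rw [Nat.sub_zero, Finset.mul_sum]
    refine Finset.sum_congr rfl fun a _ => ?_
    rw [Nat.dist_self, show 1 + 0 + a = a + 1 by omega]
  have diagR : ∑ i ∈ range (p + 1), cCoef φ i * cCoef φ i * Tsum n w (Nat.dist i i)
      = gammaU p φ 0 * Tsum n w 0 := by
    simp only [Nat.dist_self]
    rw [← Finset.sum_mul, gammaU_zero]
  have offL : ∑ d ∈ Finset.Ico 1 n, ∑ a ∈ range (n - d),
        (gammaU p φ (Nat.dist a (a + d)) * (w (a + 1) * w (a + d + 1))
          + gammaU p φ (Nat.dist (a + d) a) * (w (a + d + 1) * w (a + 1)))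
      = ∑ d ∈ Finset.Ico 1 n, 2 * gammaU p φ d * Tsum n w d := by
    refine Finset.sum_congr rfl fun d _ => ?_
    unfold Tsum
    rw [Finset.mul_sum]
    refine Finset.sum_congr rfl fun a _ => ?_
    rw [dist_add, dist_add', show 1 + d + a = a + d + 1 by omega, show 1 + a = a + 1 by omega]
    ring
  have offR : ∑ d ∈ Finset.Ico 1 (p + 1), ∑ i ∈ range (p + 1 - d),
        (cCoef φ i * cCoef φ (i + d) * Tsum n w (Nat.dist i (i + d))
          + cCoef φ (i + d) * cCoef φ i * Tsum n w (Nat.dist (i + d) i))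
      = ∑ d ∈ Finset.Ico 1 (p + 1), 2 * gammaU p φ d * Tsum n w d := by
    refine Finset.sum_congr rfl fun d hd => ?_
    simp only [Finset.mem_Ico] at hd
    have e : ∀ i ∈ range (p + 1 - d),
        cCoef φ i * cCoef φ (i + d) * Tsum n w (Nat.dist i (i + d))
          + cCoef φ (i + d) * cCoef φ i * Tsum n w (Nat.dist (i + d) i)
        = 2 * (cCoef φ i * cCoef φ (i + d)) * Tsum n w d := by
      intro i _
      rw [dist_add, dist_add']
      ring
    rw [Finset.sum_congr rfl e, ← Finset.sum_mul]
    have : ∑ i ∈ range (p + 1 - d), 2 * (cCoef φ i * cCoef φ (i + d))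
        = 2 * gammaU p φ d := by
      rw [← Finset.mul_sum]
      congr 1
      unfold gammaU
      rw [if_pos (by omega : d ≤ p), show p + 1 - d = p - d + 1 by omega]
    rw [this]
  have ext : ∑ d ∈ Finset.Ico 1 (p + 1), 2 * gammaU p φ d * Tsum n w d
      = ∑ d ∈ Finset.Ico 1 n, 2 * gammaU p φ d * Tsum n w d := by
    apply Finset.sum_subset
    · exact Finset.Ico_subset_Ico le_rfl (by omega)
    · intro d hd hnd
      simp only [Finset.mem_Ico] at hd hnd
      rw [gammaU_of_gt p φ d (by omega)]
      ring
  rw [diagL, diagR, offL, offR, ext]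

/-- The front Ω block as a double sum over `range (p+1)`. -/
lemma front_side (p n : ℕ) (hp : 1 ≤ p) (h2p : 2 * p ≤ n) (φ w : ℕ → ℝ) :
    ∑ a ∈ range p, ∑ b ∈ range p, OmegaEntry p φ (a + 1) (b + 1) * (w (a + 1) * w (b + 1))
      = ∑ i ∈ range (p + 1), ∑ j ∈ range (p + 1),
          cCoef φ i * cCoef φ j * Fsum w i j := by
  rw [decomp, decomp]
  have F_diag : ∀ i : ℕ, Fsum w i i = ∑ r ∈ range i, w (r + 1) * w (r + 1) := by
    intro i
    unfold Fsum
    rw [min_self]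
    refine Finset.sum_congr rfl fun r _ => ?_
    rw [show 1 + (i - i) + r = r + 1 by omega]
  have diagR : ∑ i ∈ range (p + 1), cCoef φ i * cCoef φ i * Fsum w i i
      = ∑ a ∈ range p, OmegaEntry p φ (a + 1) (a + 1) * (w (a + 1) * w (a + 1)) := by
    have e : ∀ i ∈ range (p + 1), cCoef φ i * cCoef φ i * Fsum w i i
        = cCoef φ i * cCoef φ i * ∑ r ∈ range i, w (r + 1) * w (r + 1) :=
      fun i _ => by rw [F_diag]
    rw [Finset.sum_congr rfl e,
      triangle p (fun i => cCoef φ i * cCoef φ i) (fun r => w (r + 1) * w (r + 1))]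
    refine Finset.sum_congr rfl fun r hr => ?_
    congr 1
    unfold OmegaEntry
    rw [Nat.dist_self, min_self, Nat.sub_zero]
    refine Finset.sum_congr rfl fun k hk => ?_
    simp only [Finset.mem_Icc] at hk
    unfold cCoef
    rw [if_neg (by omega), Nat.add_zero]
    ring
  have F_off : ∀ d i : ℕ, Fsum w i (i + d) = ∑ r ∈ range i, w (r + 1) * w (r + d + 1) := by
    intro d i
    unfold Fsum
    rw [min_eq_left (by omega : i ≤ i + d)]
    refine Finset.sum_congr rfl fun r _ => ?_
    rw [show 1 + (i - (i + d)) + r = r + 1 by omega, show 1 + (i + d - i) + r = r + d + 1 by omega]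
  have offR : ∑ d ∈ Finset.Ico 1 (p + 1), ∑ i ∈ range (p + 1 - d),
        (cCoef φ i * cCoef φ (i + d) * Fsum w i (i + d)
          + cCoef φ (i + d) * cCoef φ i * Fsum w (i + d) i)
      = ∑ d ∈ Finset.Ico 1 p, ∑ a ∈ range (p - d),
        (OmegaEntry p φ (a + 1) (a + d + 1) * (w (a + 1) * w (a + d + 1))
          + OmegaEntry p φ (a + d + 1) (a + 1) * (w (a + d + 1) * w (a + 1))) := by
    rw [Finset.sum_subset (Finset.Ico_subset_Ico le_rfl (by omega : p ≤ p + 1))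
      (fun d hd hnd => ?_)]
    swap
    · simp only [Finset.mem_Ico] at hd hnd
      rw [show p - d = 0 by omega]
      simp
    refine Finset.sum_congr rfl fun d hd => ?_
    simp only [Finset.mem_Ico] at hd
    have e : ∀ i ∈ range (p + 1 - d),
        cCoef φ i * cCoef φ (i + d) * Fsum w i (i + d)
          + cCoef φ (i + d) * cCoef φ i * Fsum w (i + d) i
        = (2 * (cCoef φ i * cCoef φ (i + d))) * ∑ r ∈ range i, w (r + 1) * w (r + d + 1) := by
      intro i _
      rw [Fsum_comm w (i + d) i, F_off]
      ring
    rw [Finset.sum_congr rfl e, show p + 1 - d = (p - d) + 1 by omega,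
      triangle (p - d) (fun i => 2 * (cCoef φ i * cCoef φ (i + d)))
        (fun r => w (r + 1) * w (r + d + 1))]
    refine Finset.sum_congr rfl fun r hr => ?_
    simp only [Finset.mem_range] at hr
    have eE : OmegaEntry p φ (r + 1) (r + d + 1)
        = ∑ k ∈ Finset.Icc (r + 1) (p - d), φ k * φ (k + d) := by
      unfold OmegaEntry
      rw [show r + d + 1 = (r + 1) + d by omega, dist_add, min_eq_left (by omega)]
    have eC : ∑ i ∈ Finset.Icc (r + 1) (p - d), 2 * (cCoef φ i * cCoef φ (i + d))
        = 2 * ∑ k ∈ Finset.Icc (r + 1) (p - d), φ k * φ (k + d) := by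
      rw [Finset.mul_sum]
      refine Finset.sum_congr rfl fun k hk => ?_
      simp only [Finset.mem_Icc] at hk
      unfold cCoef
      rw [if_neg (by omega), if_neg (by omega)]
      ring
    rw [OmegaEntry_comm p φ (r + d + 1) (r + 1), eE, eC, ← eE]
    ring
  rw [diagR, offR]

/-- The back Ω block as a double sum over `range (p+1)`. -/
lemma back_side (p n : ℕ) (hp : 1 ≤ p) (h2p : 2 * p ≤ n) (φ w : ℕ → ℝ) :
    ∑ a ∈ range p, ∑ b ∈ range p, OmegaEntry p φ (a + 1) (b + 1) * (w (n - a) * w (n - b))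
      = ∑ i ∈ range (p + 1), ∑ j ∈ range (p + 1),
          cCoef φ i * cCoef φ j * Bsum n w i j := by
  rw [decomp, decomp]
  have B_diag : ∀ i : ℕ, i ≤ n → Bsum n w i i = ∑ r ∈ range i, w (n - r) * w (n - r) := by
    intro i hi
    unfold Bsum
    rw [min_self, ← Finset.sum_range_reflect (fun r => w (n - r) * w (n - r)) i]
    refine Finset.sum_congr rfl fun r hr => ?_
    simp only [Finset.mem_range] at hr
    rw [show n - i + 1 + r = n - (i - 1 - r) by omega]
  have diagR : ∑ i ∈ range (p + 1), cCoef φ i * cCoef φ i * Bsum n w i i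
      = ∑ a ∈ range p, OmegaEntry p φ (a + 1) (a + 1) * (w (n - a) * w (n - a)) := by
    have e : ∀ i ∈ range (p + 1), cCoef φ i * cCoef φ i * Bsum n w i i
        = cCoef φ i * cCoef φ i * ∑ r ∈ range i, w (n - r) * w (n - r) := by
      intro i hi
      simp only [Finset.mem_range] at hi
      rw [B_diag i (by omega)]
    rw [Finset.sum_congr rfl e,
      triangle p (fun i => cCoef φ i * cCoef φ i) (fun r => w (n - r) * w (n - r))]
    refine Finset.sum_congr rfl fun r hr => ?_
    congr 1
    unfold OmegaEntry
    rw [Nat.dist_self, min_self, Nat.sub_zero]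
    refine Finset.sum_congr rfl fun k hk => ?_
    simp only [Finset.mem_Icc] at hk
    unfold cCoef
    rw [if_neg (by omega), Nat.add_zero]
    ring
  have B_off : ∀ d i : ℕ, i + d ≤ n →
      Bsum n w i (i + d) = ∑ r ∈ range i, w (n - d - r) * w (n - r) := by
    intro d i hdn
    unfold Bsum
    rw [min_eq_left (by omega : i ≤ i + d),
      ← Finset.sum_range_reflect (fun r => w (n - d - r) * w (n - r)) i]
    refine Finset.sum_congr rfl fun r hr => ?_
    simp only [Finset.mem_range] at hr
    rw [show n - (i + d) + 1 + r = n - d - (i - 1 - r) by omega,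
      show n - i + 1 + r = n - (i - 1 - r) by omega]
  have offR : ∑ d ∈ Finset.Ico 1 (p + 1), ∑ i ∈ range (p + 1 - d),
        (cCoef φ i * cCoef φ (i + d) * Bsum n w i (i + d)
          + cCoef φ (i + d) * cCoef φ i * Bsum n w (i + d) i)
      = ∑ d ∈ Finset.Ico 1 p, ∑ a ∈ range (p - d),
        (OmegaEntry p φ (a + 1) (a + d + 1) * (w (n - a) * w (n - (a + d)))
          + OmegaEntry p φ (a + d + 1) (a + 1) * (w (n - (a + d)) * w (n - a))) := by
    rw [Finset.sum_subset (Finset.Ico_subset_Ico le_rfl (by omega : p ≤ p + 1))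
      (fun d hd hnd => ?_)]
    swap
    · simp only [Finset.mem_Ico] at hd hnd
      rw [show p - d = 0 by omega]
      simp
    refine Finset.sum_congr rfl fun d hd => ?_
    simp only [Finset.mem_Ico] at hd
    have e : ∀ i ∈ range (p + 1 - d),
        cCoef φ i * cCoef φ (i + d) * Bsum n w i (i + d)
          + cCoef φ (i + d) * cCoef φ i * Bsum n w (i + d) i
        = (2 * (cCoef φ i * cCoef φ (i + d))) * ∑ r ∈ range i, w (n - d - r) * w (n - r) := by
      intro i hi
      simp only [Finset.mem_range] at hi
      rw [Bsum_comm n w (i + d) i, B_off d i (by omega)]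
      ring
    rw [Finset.sum_congr rfl e, show p + 1 - d = (p - d) + 1 by omega,
      triangle (p - d) (fun i => 2 * (cCoef φ i * cCoef φ (i + d)))
        (fun r => w (n - d - r) * w (n - r))]
    refine Finset.sum_congr rfl fun r hr => ?_
    simp only [Finset.mem_range] at hr
    have eE : OmegaEntry p φ (r + 1) (r + d + 1)
        = ∑ k ∈ Finset.Icc (r + 1) (p - d), φ k * φ (k + d) := by
      unfold OmegaEntry
      rw [show r + d + 1 = (r + 1) + d by omega, dist_add, min_eq_left (by omega)]
    have eC : ∑ i ∈ Finset.Icc (r + 1) (p - d), 2 * (cCoef φ i * cCoef φ (i + d))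
        = 2 * ∑ k ∈ Finset.Icc (r + 1) (p - d), φ k * φ (k + d) := by
      rw [Finset.mul_sum]
      refine Finset.sum_congr rfl fun k hk => ?_
      simp only [Finset.mem_Icc] at hk
      unfold cCoef
      rw [if_neg (by omega), if_neg (by omega)]
      ring
    rw [OmegaEntry_comm p φ (r + d + 1) (r + 1), eE, eC, ← eE,
      show n - (r + d) = n - d - r by omega]
    ring
  rw [diagR, offR]

lemma dot_eq (m : ℕ) (v : Fin m → ℝ) (M : Matrix (Fin m) (Fin m) ℝ) (f : ℕ → ℕ → ℝ)
    (hM : ∀ i j : Fin m, v i * (M i j * v j) = f i.val j.val) :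
    v ⬝ᵥ (M *ᵥ v) = ∑ i ∈ range m, ∑ j ∈ range m, f i j := by
  have h0 : v ⬝ᵥ (M *ᵥ v) = ∑ i : Fin m, ∑ j : Fin m, v i * (M i j * v j) := by
    simp [dotProduct, Matrix.mulVec, Finset.mul_sum]
  rw [h0, ← Fin.sum_univ_eq_sum_range (fun i => ∑ j ∈ range m, f i j) m]
  refine Finset.sum_congr rfl fun i _ => ?_
  rw [← Fin.sum_univ_eq_sum_range (fun j => f i.val j) m]
  exact Finset.sum_congr rfl fun j _ => hM i j

lemma sum_ite_ge' (p n : ℕ) (h : p ≤ n) (f : ℕ → ℝ) :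
    ∑ a ∈ range n, (if n ≤ a + p then f a else 0) = ∑ a ∈ range p, f (n - 1 - a) := by
  rw [sum_ite_ge p n h f, ← Finset.sum_range_reflect (fun a => f (n - 1 - a)) p]
  refine Finset.sum_congr rfl fun A hA => ?_
  simp only [Finset.mem_range] at hA
  congr 1
  omega

/-- The main Champernowne identity for `n ≥ 2p`. -/
theorem main_id (p n : ℕ) (hp : 1 ≤ p) (h2p : 2 * p ≤ n) (φ w : ℕ → ℝ) :
    betaVec p φ ⬝ᵥ (champD n p w *ᵥ betaVec p φ) =
      (fun i : Fin n => w (i.val + 1)) ⬝ᵥ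
        ((GammaDot n p φ - OmegaMat n p φ) *ᵥ fun i : Fin n => w (i.val + 1)) := by
  have hpn : p ≤ n := by omega
  have hβ : ∀ i : Fin (p + 1), betaVec p φ i = -cCoef φ i.val := by
    intro i
    unfold betaVec cCoef
    rcases Nat.eq_zero_or_pos i.val with h | h
    · simp [h]
    · rw [if_neg (by omega), if_neg (by omega)]
      ring
  have hL : betaVec p φ ⬝ᵥ (champD n p w *ᵥ betaVec p φ)
      = ∑ i ∈ range (p + 1), ∑ j ∈ range (p + 1), cCoef φ i * cCoef φ j * Dsum n w i j := by
    apply dot_eq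
    intro i j
    have hi := i.isLt
    have hj := j.isLt
    rw [hβ i, hβ j]
    simp only [champD, Matrix.of_apply]
    rw [show n + 2 - (i.val + 1) - (j.val + 1) = n - i.val - j.val by omega]
    unfold Dsum
    ring
  have hR0 : (fun i : Fin n => w (i.val + 1)) ⬝ᵥ
        ((GammaDot n p φ - OmegaMat n p φ) *ᵥ fun i : Fin n => w (i.val + 1))
      = ∑ a ∈ range n, ∑ b ∈ range n, w (a + 1) *
          ((gammaU p φ (Nat.dist a b)
            - ((if a + 1 ≤ p ∧ b + 1 ≤ p then OmegaEntry p φ (a + 1) (b + 1) else 0)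
              + (if n ≤ a + p ∧ n ≤ b + p then OmegaEntry p φ (n - a) (n - b) else 0)))
            * w (b + 1)) := by
    apply dot_eq
    intro a b
    simp only [Matrix.sub_apply, GammaDot, OmegaMat, Matrix.of_apply]
  have hsplit : ∑ a ∈ range n, ∑ b ∈ range n, w (a + 1) *
          ((gammaU p φ (Nat.dist a b)
            - ((if a + 1 ≤ p ∧ b + 1 ≤ p then OmegaEntry p φ (a + 1) (b + 1) else 0)
              + (if n ≤ a + p ∧ n ≤ b + p then OmegaEntry p φ (n - a) (n - b) else 0)))
            * w (b + 1))
      = (∑ a ∈ range n, ∑ b ∈ range n, gammaU p φ (Nat.dist a b) * (w (a + 1) * w (b + 1)))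
        - ((∑ a ∈ range n, ∑ b ∈ range n,
            (if a + 1 ≤ p ∧ b + 1 ≤ p then
              OmegaEntry p φ (a + 1) (b + 1) * (w (a + 1) * w (b + 1)) else 0))
          + (∑ a ∈ range n, ∑ b ∈ range n,
            (if n ≤ a + p ∧ n ≤ b + p then
              OmegaEntry p φ (n - a) (n - b) * (w (a + 1) * w (b + 1)) else 0))) := by
    have e1 : ∀ a ∈ range n, ∑ b ∈ range n, w (a + 1) *
          ((gammaU p φ (Nat.dist a b)
            - ((if a + 1 ≤ p ∧ b + 1 ≤ p then OmegaEntry p φ (a + 1) (b + 1) else 0)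
              + (if n ≤ a + p ∧ n ≤ b + p then OmegaEntry p φ (n - a) (n - b) else 0)))
            * w (b + 1))
        = (∑ b ∈ range n, gammaU p φ (Nat.dist a b) * (w (a + 1) * w (b + 1)))
          - ((∑ b ∈ range n,
              (if a + 1 ≤ p ∧ b + 1 ≤ p then
                OmegaEntry p φ (a + 1) (b + 1) * (w (a + 1) * w (b + 1)) else 0))
            + (∑ b ∈ range n,
              (if n ≤ a + p ∧ n ≤ b + p then
                OmegaEntry p φ (n - a) (n - b) * (w (a + 1) * w (b + 1)) else 0))) := by
      intro a _
      have e0 : ∀ b ∈ range n, w (a + 1) *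
          ((gammaU p φ (Nat.dist a b)
            - ((if a + 1 ≤ p ∧ b + 1 ≤ p then OmegaEntry p φ (a + 1) (b + 1) else 0)
              + (if n ≤ a + p ∧ n ≤ b + p then OmegaEntry p φ (n - a) (n - b) else 0)))
            * w (b + 1))
          = gammaU p φ (Nat.dist a b) * (w (a + 1) * w (b + 1))
            - ((if a + 1 ≤ p ∧ b + 1 ≤ p then
                OmegaEntry p φ (a + 1) (b + 1) * (w (a + 1) * w (b + 1)) else 0)
              + (if n ≤ a + p ∧ n ≤ b + p then
                OmegaEntry p φ (n - a) (n - b) * (w (a + 1) * w (b + 1)) else 0)) := by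
        intro b _
        split_ifs <;> ring
      rw [Finset.sum_congr rfl e0, Finset.sum_sub_distrib, Finset.sum_add_distrib]
    rw [Finset.sum_congr rfl e1, Finset.sum_sub_distrib, Finset.sum_add_distrib]
  have redF : ∑ a ∈ range n, ∑ b ∈ range n,
        (if a + 1 ≤ p ∧ b + 1 ≤ p then
          OmegaEntry p φ (a + 1) (b + 1) * (w (a + 1) * w (b + 1)) else 0)
      = ∑ a ∈ range p, ∑ b ∈ range p,
          OmegaEntry p φ (a + 1) (b + 1) * (w (a + 1) * w (b + 1)) := by
    have e1 : ∀ a ∈ range n, ∑ b ∈ range n,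
          (if a + 1 ≤ p ∧ b + 1 ≤ p then
            OmegaEntry p φ (a + 1) (b + 1) * (w (a + 1) * w (b + 1)) else 0)
        = (if a + 1 ≤ p then
            ∑ b ∈ range p, OmegaEntry p φ (a + 1) (b + 1) * (w (a + 1) * w (b + 1)) else 0) := by
      intro a _
      by_cases h : a + 1 ≤ p
      · rw [if_pos h,
          ← sum_ite_lt p n hpn (fun b => OmegaEntry p φ (a + 1) (b + 1) * (w (a + 1) * w (b + 1)))]
        exact Finset.sum_congr rfl fun b _ => by simp [h]
      · rw [if_neg h]
        exact Finset.sum_eq_zero fun b _ => by rw [if_neg (by tauto)]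
    rw [Finset.sum_congr rfl e1, sum_ite_lt p n hpn]
  have redB : ∑ a ∈ range n, ∑ b ∈ range n,
        (if n ≤ a + p ∧ n ≤ b + p then
          OmegaEntry p φ (n - a) (n - b) * (w (a + 1) * w (b + 1)) else 0)
      = ∑ a ∈ range p, ∑ b ∈ range p,
          OmegaEntry p φ (a + 1) (b + 1) * (w (n - a) * w (n - b)) := by
    have e1 : ∀ a ∈ range n, ∑ b ∈ range n,
          (if n ≤ a + p ∧ n ≤ b + p then
            OmegaEntry p φ (n - a) (n - b) * (w (a + 1) * w (b + 1)) else 0)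
        = (if n ≤ a + p then
            ∑ b ∈ range p, OmegaEntry p φ (n - a) (n - (n - 1 - b)) * (w (a + 1) * w (n - 1 - b + 1))
          else 0) := by
      intro a _
      by_cases h : n ≤ a + p
      · rw [if_pos h,
          ← sum_ite_ge' p n hpn (fun b => OmegaEntry p φ (n - a) (n - b) * (w (a + 1) * w (b + 1)))]
        exact Finset.sum_congr rfl fun b _ => by simp [h]
      · rw [if_neg h]
        exact Finset.sum_eq_zero fun b _ => by rw [if_neg (by tauto)]
    rw [Finset.sum_congr rfl e1,
      sum_ite_ge' p n hpn (fun a => ∑ b ∈ range p,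
        OmegaEntry p φ (n - a) (n - (n - 1 - b)) * (w (a + 1) * w (n - 1 - b + 1)))]
    refine Finset.sum_congr rfl fun a ha => ?_
    simp only [Finset.mem_range] at ha
    refine Finset.sum_congr rfl fun b hb => ?_
    simp only [Finset.mem_range] at hb
    rw [show n - (n - 1 - a) = a + 1 by omega, show n - (n - 1 - b) = b + 1 by omega,
      show n - 1 - a + 1 = n - a by omega, show n - 1 - b + 1 = n - b by omega]
  rw [hL, hR0, hsplit, redF, redB, gamma_side p n hp h2p φ w, front_side p n hp h2p φ w,
    back_side p n hp h2p φ w, ← Finset.sum_add_distrib, ← Finset.sum_sub_distrib]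
  refine Finset.sum_congr rfl fun i hi => ?_
  rw [← Finset.sum_add_distrib, ← Finset.sum_sub_distrib]
  refine Finset.sum_congr rfl fun j hj => ?_
  simp only [Finset.mem_range] at hi hj
  rw [star n w i j (by omega)]
  ring

/-- Counterexample for `p ≤ n < 2p`. -/
theorem counter (p n : ℕ) (hp : 1 ≤ p) (hpn : p ≤ n) (hlt : n < 2 * p) :
    ∃ φ w : ℕ → ℝ,
      betaVec p φ ⬝ᵥ (champD n p w *ᵥ betaVec p φ) ≠
        (fun i : Fin n => w (i.val + 1)) ⬝ᵥ
          ((GammaDot n p φ - OmegaMat n p φ) *ᵥ fun i : Fin n => w (i.val + 1)) := by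
  set φ₀ : ℕ → ℝ := fun k => if k = p then (1 : ℝ) else 0 with hφ₀
  set w₀ : ℕ → ℝ := fun _ => (1 : ℝ) with hw₀
  refine ⟨φ₀, w₀, ?_⟩
  have hβ : ∀ i : Fin (p + 1), betaVec p φ₀ i = -cCoef φ₀ i.val := by
    intro i
    unfold betaVec cCoef
    rcases Nat.eq_zero_or_pos i.val with h | h
    · simp [h]
    · rw [if_neg (by omega), if_neg (by omega)]
      ring
  have two_point : ∀ g : ℕ → ℝ, ∑ i ∈ range (p + 1), cCoef φ₀ i * g i = g 0 - g p := by
    intro g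
    rw [← Finset.sum_subset (Finset.insert_subset_iff.mpr
      ⟨Finset.mem_range.mpr (by omega), Finset.singleton_subset_iff.mpr
        (Finset.mem_range.mpr (by omega))⟩ : ({0, p} : Finset ℕ) ⊆ range (p + 1))]
    · rw [Finset.sum_pair (by omega : (0 : ℕ) ≠ p)]
      unfold cCoef
      rw [if_pos rfl, if_neg (by omega)]
      simp [hφ₀]
      ring
    · intro i _ hi
      simp only [Finset.mem_insert, Finset.mem_singleton] at hi
      push_neg at hi
      unfold cCoef
      rw [if_neg hi.1]
      simp [hφ₀, hi.2]
  -- LHS computation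
  have hL : betaVec p φ₀ ⬝ᵥ (champD n p w₀ *ᵥ betaVec p φ₀) = 2 * (p : ℝ) - n := by
    have h1 : betaVec p φ₀ ⬝ᵥ (champD n p w₀ *ᵥ betaVec p φ₀)
        = ∑ i ∈ range (p + 1), ∑ j ∈ range (p + 1),
            cCoef φ₀ i * (cCoef φ₀ j * ((n + 2 - (i + 1) - (j + 1) : ℕ) : ℝ)) := by
      apply dot_eq
      intro i j
      rw [hβ i, hβ j]
      simp only [champD, Matrix.of_apply, hw₀, mul_one, Finset.sum_const, Finset.card_range,
        nsmul_eq_mul]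
      ring
    rw [h1]
    have h2 : ∀ i ∈ range (p + 1), ∑ j ∈ range (p + 1),
          cCoef φ₀ i * (cCoef φ₀ j * ((n + 2 - (i + 1) - (j + 1) : ℕ) : ℝ))
        = cCoef φ₀ i * (((n + 2 - (i + 1) - (0 + 1) : ℕ) : ℝ)
            - ((n + 2 - (i + 1) - (p + 1) : ℕ) : ℝ)) := by
      intro i _
      rw [← Finset.mul_sum, two_point (fun j => ((n + 2 - (i + 1) - (j + 1) : ℕ) : ℝ))]
    rw [Finset.sum_congr rfl h2, two_point (fun i => ((n + 2 - (i + 1) - (0 + 1) : ℕ) : ℝ)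
      - ((n + 2 - (i + 1) - (p + 1) : ℕ) : ℝ))]
    rw [show n + 2 - (0 + 1) - (0 + 1) = n by omega,
      show n + 2 - (0 + 1) - (p + 1) = n - p by omega,
      show n + 2 - (p + 1) - (0 + 1) = n - p by omega,
      show n + 2 - (p + 1) - (p + 1) = 0 by omega,
      Nat.cast_sub hpn]
    push_cast
    ring
  -- RHS computation
  have hE : ∀ i j : ℕ, 1 ≤ i → i ≤ p → 1 ≤ j → j ≤ p →
      OmegaEntry p φ₀ i j = if i = j then (1 : ℝ) else 0 := by
    intro i j h1 h2 h3 h4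
    unfold OmegaEntry
    by_cases hij : i = j
    · subst hij
      rw [if_pos rfl, Nat.dist_self, min_self, Nat.sub_zero]
      rw [Finset.sum_eq_single_of_mem p (Finset.mem_Icc.mpr ⟨h2, le_rfl⟩)]
      · simp [hφ₀]
      · intro k _ hk
        simp [hφ₀, hk]
    · rw [if_neg hij]
      have hd1 : Nat.dist i j ≠ 0 := by
        rw [show Nat.dist i j = i - j + (j - i) from rfl]
        omega
      generalize hD : Nat.dist i j = D at hd1 ⊢
      apply Finset.sum_eq_zero
      intro k _
      simp only [hφ₀]
      split_ifs with hc1 hc2 <;> first | (exfalso; omega) | norm_num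
  have hRform : (fun i : Fin n => w₀ (i.val + 1)) ⬝ᵥ
        ((GammaDot n p φ₀ - OmegaMat n p φ₀) *ᵥ fun i : Fin n => w₀ (i.val + 1))
      = ∑ a ∈ range n, ∑ b ∈ range n,
          (gammaU p φ₀ (Nat.dist a b)
            - ((if b = a ∧ a + 1 ≤ p then (1 : ℝ) else 0)
              + (if b = a ∧ n ≤ a + p then (1 : ℝ) else 0))) := by
    apply dot_eq
    intro a b
    have ha := a.isLt
    have hb := b.isLt
    simp only [Matrix.sub_apply, GammaDot, OmegaMat, Matrix.of_apply, hw₀, one_mul, mul_one]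
    congr 2
    · by_cases h : a.val + 1 ≤ p ∧ b.val + 1 ≤ p
      · rw [if_pos h, hE (a.val + 1) (b.val + 1) (by omega) (by omega) (by omega) (by omega)]
        by_cases hab : b.val = a.val
        · rw [if_pos (by omega), if_pos ⟨hab, h.1⟩]
        · rw [if_neg (by omega), if_neg (by tauto)]
      · rw [if_neg h, if_neg (by rintro ⟨h1, h2⟩; exact h ⟨h2, by omega⟩)]
    · by_cases h : n ≤ a.val + p ∧ n ≤ b.val + p
      · rw [if_pos h, hE (n - a.val) (n - b.val) (by omega) (by omega) (by omega) (by omega)]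
        by_cases hab : b.val = a.val
        · rw [if_pos (by omega), if_pos ⟨hab, h.1⟩]
        · rw [if_neg (by omega), if_neg (by tauto)]
      · rw [if_neg h, if_neg (by rintro ⟨h1, h2⟩; exact h ⟨h2, by omega⟩)]
  -- value lemmas for gammaU at φ₀
  have gam0 : gammaU p φ₀ 0 = 2 := by
    rw [gammaU_zero, two_point (fun l => cCoef φ₀ l)]
    unfold cCoef
    rw [if_pos rfl, if_neg (by omega)]
    norm_num [hφ₀]
  have gamp : gammaU p φ₀ p = -1 := by
    unfold gammaU
    rw [if_pos le_rfl, show p - p + 1 = 1 by omega, Finset.sum_range_one]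
    unfold cCoef
    rw [if_pos rfl, if_neg (by omega : ¬(0 + p = 0))]
    norm_num [hφ₀]
  have gammid : ∀ k : ℕ, k ≠ 0 → k ≠ p → gammaU p φ₀ k = 0 := by
    intro k hk0 hkp
    by_cases hkle : k ≤ p
    · unfold gammaU
      rw [if_pos hkle]
      apply Finset.sum_eq_zero
      intro l hl
      simp only [Finset.mem_range] at hl
      unfold cCoef
      rcases eq_or_ne l 0 with h | h
      · subst h
        rw [if_pos rfl, if_neg (by omega)]
        simp [hφ₀, hkp, show 0 + k = k from by omega]
      · rw [if_neg h]
        simp only [hφ₀]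
        rw [if_neg (by omega)]
        ring
    · exact gammaU_of_gt p φ₀ k (by omega)
  have hγpt : ∀ a b : ℕ, gammaU p φ₀ (Nat.dist a b)
      = (if b = a then (2 : ℝ) else 0)
        - ((if b = a + p then (1 : ℝ) else 0) + (if a = b + p then (1 : ℝ) else 0)) := by
    intro a b
    by_cases h1 : b = a
    · rw [h1, Nat.dist_self, gam0, if_pos rfl, if_neg (by omega : ¬(a = a + p))]
      ring
    · by_cases h2 : b = a + p
      · subst h2
        rw [dist_add, gamp, if_neg h1, if_pos rfl, if_neg (by omega)]
        ring
      · by_cases h3 : a = b + p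
        · subst h3
          rw [dist_add', gamp, if_neg h1, if_neg (by omega), if_pos rfl]
          ring
        · rw [show Nat.dist a b = a - b + (b - a) from rfl,
            gammid (a - b + (b - a)) (by omega) (by omega), if_neg h1, if_neg h2, if_neg h3]
          ring
  -- counting sums
  have cnt1 : ∑ a ∈ range n, (if a + p < n then (1 : ℝ) else 0) = ((n - p : ℕ) : ℝ) := by
    rw [Finset.sum_boole]
    congr 1
    rw [show (range n).filter (fun a => a + p < n) = range (n - p) by ext x; simp; omega,
      Finset.card_range]
  have cnt2 : ∑ a ∈ range n, (if p ≤ a then (1 : ℝ) else 0) = ((n - p : ℕ) : ℝ) := by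
    rw [Finset.sum_boole]
    congr 1
    rw [show (range n).filter (fun a => p ≤ a) = Finset.Ico p n by ext x; simp; omega,
      Nat.card_Ico]
  have cnt3 : ∑ a ∈ range n, (if a + 1 ≤ p then (1 : ℝ) else 0) = (p : ℝ) := by
    rw [Finset.sum_boole]
    congr 1
    rw [show (range n).filter (fun a => a + 1 ≤ p) = range p by ext x; simp; omega,
      Finset.card_range]
  have cnt4 : ∑ a ∈ range n, (if n ≤ a + p then (1 : ℝ) else 0) = (p : ℝ) := by
    rw [Finset.sum_boole]
    congr 1
    rw [show (range n).filter (fun a => n ≤ a + p) = Finset.Ico (n - p) n by ext x; simp; omega,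
      Nat.card_Ico]
    omega
  -- assemble RHS value
  have hR : (fun i : Fin n => w₀ (i.val + 1)) ⬝ᵥ
        ((GammaDot n p φ₀ - OmegaMat n p φ₀) *ᵥ fun i : Fin n => w₀ (i.val + 1)) = 0 := by
    rw [hRform]
    have e1 : ∀ a ∈ range n, ∑ b ∈ range n,
          (gammaU p φ₀ (Nat.dist a b)
            - ((if b = a ∧ a + 1 ≤ p then (1 : ℝ) else 0)
              + (if b = a ∧ n ≤ a + p then (1 : ℝ) else 0)))
        = 2 - ((if a + p < n then (1 : ℝ) else 0) + (if p ≤ a then (1 : ℝ) else 0))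
          - ((if a + 1 ≤ p then (1 : ℝ) else 0) + (if n ≤ a + p then (1 : ℝ) else 0)) := by
      intro a ha
      simp only [Finset.mem_range] at ha
      have e0 : ∀ b ∈ range n,
          (gammaU p φ₀ (Nat.dist a b)
            - ((if b = a ∧ a + 1 ≤ p then (1 : ℝ) else 0)
              + (if b = a ∧ n ≤ a + p then (1 : ℝ) else 0)))
          = ((if b = a then (2 : ℝ) else 0)
              - ((if b = a + p then (1 : ℝ) else 0) + (if a = b + p then (1 : ℝ) else 0)))
            - ((if b = a ∧ a + 1 ≤ p then (1 : ℝ) else 0)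
              + (if b = a ∧ n ≤ a + p then (1 : ℝ) else 0)) := by
        intro b _
        rw [hγpt a b]
      rw [Finset.sum_congr rfl e0]
      rw [Finset.sum_sub_distrib, Finset.sum_sub_distrib, Finset.sum_add_distrib,
        Finset.sum_add_distrib]
      have s1 : ∑ b ∈ range n, (if b = a then (2 : ℝ) else 0) = 2 := by
        rw [Finset.sum_ite_eq' (range n) a (fun _ => (2 : ℝ)),
          if_pos (Finset.mem_range.mpr ha)]
      have s2 : ∑ b ∈ range n, (if b = a + p then (1 : ℝ) else 0)
          = (if a + p < n then (1 : ℝ) else 0) := by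
        rw [Finset.sum_ite_eq' (range n) (a + p) (fun _ => (1 : ℝ))]
        by_cases h : a + p < n
        · rw [if_pos (Finset.mem_range.mpr h), if_pos h]
        · rw [if_neg (fun hc => h (Finset.mem_range.mp hc)), if_neg h]
      have s3 : ∑ b ∈ range n, (if a = b + p then (1 : ℝ) else 0)
          = (if p ≤ a then (1 : ℝ) else 0) := by
        have e : ∀ b ∈ range n, (if a = b + p then (1 : ℝ) else 0)
            = (if b = a - p ∧ p ≤ a then (1 : ℝ) else 0) := by
          intro b _
          by_cases h : a = b + p
          · rw [if_pos h, if_pos (by omega)]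
          · rw [if_neg h, if_neg (by omega)]
        rw [Finset.sum_congr rfl e]
        by_cases h : p ≤ a
        · have e2 : ∀ b ∈ range n, (if b = a - p ∧ p ≤ a then (1 : ℝ) else 0)
              = (if b = a - p then (1 : ℝ) else 0) := by
            intro b _
            by_cases hb : b = a - p
            · rw [if_pos ⟨hb, h⟩, if_pos hb]
            · rw [if_neg (by tauto), if_neg hb]
          rw [Finset.sum_congr rfl e2,
            Finset.sum_ite_eq' (range n) (a - p) (fun _ => (1 : ℝ)),
            if_pos (Finset.mem_range.mpr (by omega)), if_pos h]
        · rw [if_neg h]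
          exact Finset.sum_eq_zero fun b _ => by rw [if_neg (by tauto)]
      have s4 : ∑ b ∈ range n, (if b = a ∧ a + 1 ≤ p then (1 : ℝ) else 0)
          = (if a + 1 ≤ p then (1 : ℝ) else 0) := by
        by_cases h : a + 1 ≤ p
        · have e2 : ∀ b ∈ range n, (if b = a ∧ a + 1 ≤ p then (1 : ℝ) else 0)
              = (if b = a then (1 : ℝ) else 0) := by
            intro b _
            by_cases hb : b = a
            · rw [if_pos ⟨hb, h⟩, if_pos hb]
            · rw [if_neg (by tauto), if_neg hb]
          rw [Finset.sum_congr rfl e2, Finset.sum_ite_eq' (range n) a (fun _ => (1 : ℝ)),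
            if_pos (Finset.mem_range.mpr ha), if_pos h]
        · rw [if_neg h]
          exact Finset.sum_eq_zero fun b _ => by rw [if_neg (by tauto)]
      have s5 : ∑ b ∈ range n, (if b = a ∧ n ≤ a + p then (1 : ℝ) else 0)
          = (if n ≤ a + p then (1 : ℝ) else 0) := by
        by_cases h : n ≤ a + p
        · have e2 : ∀ b ∈ range n, (if b = a ∧ n ≤ a + p then (1 : ℝ) else 0)
              = (if b = a then (1 : ℝ) else 0) := by
            intro b _
            by_cases hb : b = a
            · rw [if_pos ⟨hb, h⟩, if_pos hb]
            · rw [if_neg (by tauto), if_neg hb]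
          rw [Finset.sum_congr rfl e2, Finset.sum_ite_eq' (range n) a (fun _ => (1 : ℝ)),
            if_pos (Finset.mem_range.mpr ha), if_pos h]
        · rw [if_neg h]
          exact Finset.sum_eq_zero fun b _ => by rw [if_neg (by tauto)]
      rw [s1, s2, s3, s4, s5]
    rw [Finset.sum_congr rfl e1]
    rw [Finset.sum_sub_distrib, Finset.sum_sub_distrib, Finset.sum_add_distrib,
      Finset.sum_add_distrib, cnt1, cnt2, cnt3, cnt4, Finset.sum_const, Finset.card_range,
      Nat.cast_sub hpn]
    push_cast
    ring
  rw [hL, hR]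
  have hcast : (n : ℝ) < 2 * p := by exact_mod_cast hlt
  intro hcontra
  linarith

end Champ

/-- If `p ≤ n < 2p` the Champernowne identity fails: there exist `φ ∈ ℝᵖ` and
`w ∈ ℝⁿ` with `βᵀ D β ≠ wᵀ (Γ̇ₙ − Ω) w`.  Combined with the validity of the
identity for `n ≥ 2p`, the identity holds for all `w` and `φ` iff `n ≥ 2p`. -/
theorem champernowne_identity_iff (p n : ℕ) (hp : 1 ≤ p) (hpn : p ≤ n) :
    (n < 2 * p → ∃ φ w : ℕ → ℝ,
      betaVec p φ ⬝ᵥ (champD n p w *ᵥ betaVec p φ) ≠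
        (fun i : Fin n => w (i.val + 1)) ⬝ᵥ
          ((GammaDot n p φ - OmegaMat n p φ) *ᵥ fun i : Fin n => w (i.val + 1))) ∧
    ((∀ φ w : ℕ → ℝ,
      betaVec p φ ⬝ᵥ (champD n p w *ᵥ betaVec p φ) =
        (fun i : Fin n => w (i.val + 1)) ⬝ᵥ
          ((GammaDot n p φ - OmegaMat n p φ) *ᵥ fun i : Fin n => w (i.val + 1))) ↔
      2 * p ≤ n) := by
  refine ⟨fun hlt => Champ.counter p n hp hpn hlt, ⟨fun hall => ?_, fun h2p φ w => Champ.main_id p n hp h2p φ w⟩⟩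
  by_contra hlt
  push_neg at hlt
  obtain ⟨φ, w, hne⟩ := Champ.counter p n hp hpn hlt
  exact hne (hall φ w)
end

section
/- Suppose n ≥ 2p and let M = Γ̇ₙ − Ω. Then the row-sum vector 1ₙᵀ M has the following explicit form: its j-th entry equals φ(1)² − κ_j − ε_j for 1 ≤ j ≤ p, equals φ(1)² for p < j ≤ n − p, and equals the (n+1−j)-th-mirrored value, i.e. (1ₙᵀM)_j = (1ₙᵀM)_{n+1−j}, for n − p < j ≤ n; here φ(1) = 1 − φ₁ − ⋯ − φ_p, κ_j = Σ_{k=j}^{p} γ_k^{(u)}, and ε_j = Σ_{i=1}^{p} Ω_{i,j}. Consequently 1ₙᵀ M can be evaluated in O(n) flops (eq. (11) of the paper). -/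
/-!
Column `j` of `Γ̇ₙ` sums the autocovariances `γ_{|i−j|}`: lags `0, …, j−1` on one side, lags
`1, …, n−j` on the other. Expanding `φ(1)² = (∑ₗ cₗ)²` by lag gives
`γ₀ + 2 ∑_{k=1}^{p} γₖ = φ(1)²`, so a column at distance at least `p` from both edges sums
to `φ(1)²`, while a column near the top edge misses exactly the lags `j, …, p`, i.e. `κ_j`.
Since `n ≥ 2p`, only the upper corner block of `Ω` meets such a column, contributing `ε_j`.
The reflection `i ↦ n + 1 − i` fixes both `Γ̇ₙ` and `Ω`, which gives the mirrored entries.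
-/

open Matrix Finset

/-- `φ(1) = 1 − φ₁ − ⋯ − φ_p`. -/
noncomputable def phiAtOne (p : ℕ) (φ : ℕ → ℝ) : ℝ := 1 - ∑ k ∈ Finset.Icc 1 p, φ k

/-- `κ_j = Σ_{k=j}^{p} γ_k^{(u)}`. -/
noncomputable def kappa (p : ℕ) (φ : ℕ → ℝ) (j : ℕ) : ℝ := ∑ k ∈ Finset.Icc j p, gammaU p φ k

/-- `ε_j = Σ_{i=1}^{p} Ω_{i,j}`. -/
noncomputable def epsilonSum (p : ℕ) (φ : ℕ → ℝ) (j : ℕ) : ℝ :=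
  ∑ i ∈ Finset.Icc 1 p, OmegaEntry p φ i j

/-- The `j`-th entry of the row-sum vector `1ₙᵀ M` where `M = Γ̇ₙ − Ω`. -/
noncomputable def rowSum (n p : ℕ) (φ : ℕ → ℝ) (j : Fin n) : ℝ :=
  ∑ i : Fin n, (GammaDot n p φ - OmegaMat n p φ) i j

section Reindexing

variable {M R : Type*} [AddCommMonoid M] [CommSemiring R]

theorem sum_range_sum_Icc_eq_sum_lag (g : ℕ → ℕ → M) (p k : ℕ) :
    ∑ l ∈ range (p + 1), ∑ m ∈ Icc (l + k) p, g l m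
      = ∑ a ∈ Icc k p, ∑ l ∈ range (p - a + 1), g l (l + a) := by
  have shift : ∀ l ∈ range (p + 1),
      ∑ m ∈ Icc (l + k) p, g l m = ∑ a ∈ Icc k (p - l), g l (l + a) := by
    intro l hl
    have hlp : l + (p - l) = p := by simp only [mem_range] at hl; omega
    have hIcc : Icc (l + k) p = (Icc k (p - l)).map (addLeftEmbedding l) := by
      rw [map_add_left_Icc, hlp]
    rw [hIcc, sum_map]
    rfl
  rw [sum_congr rfl shift]
  exact sum_comm' fun l a => by simp only [mem_range, mem_Icc]; omega

theorem sq_sum_range_eq_sum_lag (f : ℕ → R) (p : ℕ) :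
    (∑ l ∈ range (p + 1), f l) ^ 2
      = ∑ a ∈ range (p + 1), ∑ l ∈ range (p - a + 1), f l * f (l + a)
        + ∑ a ∈ Icc 1 p, ∑ l ∈ range (p - a + 1), f l * f (l + a) := by
  -- `l + 0` rather than `l`, so that `sum_range_sum_Icc_eq_sum_lag` applies with `k = 0`
  have split : ∀ l ∈ range (p + 1), ∑ m ∈ range (p + 1), f l * f m
      = ∑ m ∈ range l, f l * f m + ∑ m ∈ Icc (l + 0) p, f l * f m := by
    intro l hl
    rw [add_zero, ← Ico_add_one_right_eq_Icc,
      sum_range_add_sum_Ico _ (mem_range.1 hl).le]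
  have lower : ∑ l ∈ range (p + 1), ∑ m ∈ range l, f l * f m
      = ∑ m ∈ range (p + 1), ∑ l ∈ Icc (m + 1) p, f l * f m :=
    sum_comm' fun l m => by simp only [mem_range, mem_Icc]; omega
  rw [sq, sum_mul_sum, sum_congr rfl split, sum_add_distrib, lower,
    sum_range_sum_Icc_eq_sum_lag, sum_range_sum_Icc_eq_sum_lag,
    ← Nat.range_succ_eq_Icc_zero, add_comm]
  simp only [mul_comm (f (_ + _))]

theorem sum_range_dist_eq (g : ℕ → M) {n j : ℕ} (hj : j < n) :
    ∑ i ∈ range n, g (Nat.dist i j)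
      = ∑ a ∈ range (j + 1), g a + ∑ a ∈ Icc 1 (n - 1 - j), g a := by
  rw [← sum_range_add_sum_Ico _ hj]
  congr 1
  · rw [← sum_range_reflect]
    refine sum_congr rfl fun i hi => ?_
    have hij : i < j + 1 := mem_range.1 hi
    rw [Nat.dist_eq_sub_of_le (by omega)]
    congr 1
    omega
  · have hIco : Ico (j + 1) n = (Icc 1 (n - 1 - j)).map (addLeftEmbedding j) := by
      rw [map_add_left_Icc]
      ext i
      simp only [mem_Ico, mem_Icc]
      omega
    rw [hIco, sum_map]
    simp [Nat.dist]

end Reindexing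

section ARCoefficients

variable (p : ℕ) (φ : ℕ → ℝ)

theorem sum_range_cCoef : ∑ l ∈ range (p + 1), cCoef φ l = phiAtOne p φ := by
  rw [sum_range_succ', phiAtOne, ← Ico_add_one_right_eq_Icc, sum_Ico_eq_sum_range]
  simp [cCoef, add_comm, sum_neg_distrib, sub_eq_add_neg]

theorem gammaU_eq_zero_of_lt {k : ℕ} (hk : p < k) : gammaU p φ k = 0 :=
  if_neg (Nat.not_le.mpr hk)

theorem sum_gammaU : ∑ a ∈ range (p + 1), gammaU p φ a + ∑ a ∈ Icc 1 p, gammaU p φ a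
    = phiAtOne p φ ^ 2 := by
  have hγ : ∀ a ∈ Icc 0 p,
      gammaU p φ a = ∑ l ∈ range (p - a + 1), cCoef φ l * cCoef φ (l + a) :=
    fun a ha => if_pos (mem_Icc.1 ha).2
  rw [← sum_range_cCoef, sq_sum_range_eq_sum_lag, Nat.range_succ_eq_Icc_zero, sum_congr rfl hγ,
    sum_congr rfl fun a ha => hγ a (Icc_subset_Icc_left (Nat.zero_le 1) ha)]

end ARCoefficients

section Matrices

variable {n p : ℕ} (φ : ℕ → ℝ)

theorem sum_GammaDot_col {j : Fin n} (hj : j.val + p < n) :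
    ∑ i, GammaDot n p φ i j
      = ∑ a ∈ range (j.val + 1), gammaU p φ a + ∑ a ∈ Icc 1 p, gammaU p φ a := by
  simp only [GammaDot, of_apply]
  rw [Fin.sum_univ_eq_sum_range (fun i => gammaU p φ (Nat.dist i j)), sum_range_dist_eq _ j.isLt]
  congr 1
  refine (sum_subset (Icc_subset_Icc_right (by omega)) fun a ha hap => ?_).symm
  simp only [mem_Icc] at ha hap
  exact gammaU_eq_zero_of_lt p φ (by omega)

theorem sum_GammaDot_col_of_lt {j : Fin n} (hj : j.val + 1 ≤ p) (hjn : j.val + p < n) :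
    ∑ i, GammaDot n p φ i j = phiAtOne p φ ^ 2 - kappa p φ (j.val + 1) := by
  have hsplit : ∑ a ∈ range (p + 1), gammaU p φ a
      = ∑ a ∈ range (j.val + 1), gammaU p φ a
        + ∑ a ∈ Icc (j.val + 1) p, gammaU p φ a := by
    rw [← Ico_add_one_right_eq_Icc, sum_range_add_sum_Ico _ (by omega)]
  rw [sum_GammaDot_col φ hjn, ← sum_gammaU, kappa, hsplit]
  ring

theorem sum_GammaDot_col_of_le {j : Fin n} (hj : p ≤ j.val) (hjn : j.val + p < n) :
    ∑ i, GammaDot n p φ i j = phiAtOne p φ ^ 2 := by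
  rw [sum_GammaDot_col φ hjn, ← sum_gammaU]
  congr 1
  refine (sum_subset (range_subset_range.2 (by omega)) fun a ha hap => ?_).symm
  simp only [mem_range] at ha hap
  exact gammaU_eq_zero_of_lt p φ (by omega)

theorem sum_OmegaMat_col_of_lt {j : Fin n} (hj : j.val + 1 ≤ p) (hn : 2 * p ≤ n) :
    ∑ i, OmegaMat n p φ i j = epsilonSum p φ (j.val + 1) := by
  have hcol : ∀ i : Fin n, OmegaMat n p φ i j
      = if i.val + 1 ≤ p then OmegaEntry p φ (i.val + 1) (j.val + 1) else 0 := by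
    intro i
    simp only [OmegaMat, of_apply]
    rw [if_neg (show ¬(n ≤ i.val + p ∧ n ≤ j.val + p) by omega), add_zero]
    exact if_congr (by omega) rfl rfl
  have hfilter : (range n).filter (· + 1 ≤ p) = range p := by
    ext i
    simp only [mem_filter, mem_range]
    omega
  rw [sum_congr rfl fun i _ => hcol i,
    Fin.sum_univ_eq_sum_range
      (fun i => if i + 1 ≤ p then OmegaEntry p φ (i + 1) (j.val + 1) else 0),
    ← sum_filter, hfilter, epsilonSum, ← Ico_add_one_right_eq_Icc, sum_Ico_eq_sum_range]
  simp only [add_tsub_cancel_right, add_comm 1]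

theorem sum_OmegaMat_col_eq_zero {j : Fin n} (hj : p ≤ j.val) (hjn : j.val + p < n) :
    ∑ i, OmegaMat n p φ i j = 0 :=
  sum_eq_zero fun i _ => by
    simp only [OmegaMat, of_apply]
    rw [if_neg (by omega), if_neg (by omega), add_zero]

theorem GammaDot_rev (i j : Fin n) : GammaDot n p φ i.rev j.rev = GammaDot n p φ i j := by
  simp only [GammaDot, of_apply, Fin.val_rev]
  congr 1
  simp only [Nat.dist]
  omega

theorem OmegaMat_rev (i j : Fin n) : OmegaMat n p φ i.rev j.rev = OmegaMat n p φ i j := by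
  have hi := i.isLt
  have hj := j.isLt
  simp only [OmegaMat, of_apply, Fin.val_rev]
  rw [add_comm]
  congr 1
  · refine if_congr (by omega) ?_ rfl
    congr 1 <;> omega
  · refine if_congr (by omega) ?_ rfl
    congr 1 <;> omega

theorem rowSum_eq_sub (j : Fin n) :
    rowSum n p φ j = ∑ i, GammaDot n p φ i j - ∑ i, OmegaMat n p φ i j := by
  simp only [rowSum, Matrix.sub_apply, sum_sub_distrib]

theorem rowSum_rev (j : Fin n) : rowSum n p φ j.rev = rowSum n p φ j := by
  rw [rowSum, rowSum]
  refine Fintype.sum_equiv Fin.revPerm _ _ fun i => ?_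
  rw [Fin.revPerm_apply, Matrix.sub_apply, Matrix.sub_apply, ← GammaDot_rev, ← OmegaMat_rev,
    Fin.rev_rev]

end Matrices

theorem rowSum_zindeWalsh_general (p n : ℕ) (hn : 2 * p ≤ n) (φ : ℕ → ℝ) :
    (∀ j : Fin n, j.val + 1 ≤ p →
      rowSum n p φ j = phiAtOne p φ ^ 2 - kappa p φ (j.val + 1) - epsilonSum p φ (j.val + 1)) ∧
    (∀ j : Fin n, p < j.val + 1 → j.val + 1 ≤ n - p →
      rowSum n p φ j = phiAtOne p φ ^ 2) ∧
    (∀ j j' : Fin n, n - p < j.val + 1 → j'.val + 1 = n + 1 - (j.val + 1) →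
      rowSum n p φ j = rowSum n p φ j') := by
  refine ⟨fun j hj => ?_, fun j hj₁ hj₂ => ?_, fun j j' _ hj' => ?_⟩
  · rw [rowSum_eq_sub, sum_GammaDot_col_of_lt φ hj (by omega), sum_OmegaMat_col_of_lt φ hj hn]
  · have hjn : j.val + p < n := by omega
    rw [rowSum_eq_sub, sum_GammaDot_col_of_le φ (by omega) hjn,
      sum_OmegaMat_col_eq_zero φ (by omega) hjn, sub_zero]
  · obtain rfl : j' = j.rev := Fin.ext (by rw [Fin.val_rev]; omega)
    exact (rowSum_rev φ j).symm

/-- For `n ≥ 2p` and `M = Γ̇ₙ − Ω`, the row-sum vector `1ₙᵀ M` has (1-based)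
`j`-th entry `φ(1)² − κ_j − ε_j` for `1 ≤ j ≤ p`, entry `φ(1)²` for
`p < j ≤ n − p`, and mirrored value `(1ₙᵀM)_j = (1ₙᵀM)_{n+1−j}` for
`n − p < j ≤ n` (eq. (11) of the paper). -/
theorem rowSum_zindeWalsh (p n : ℕ) (hp : 1 ≤ p) (hn : 2 * p ≤ n) (φ : ℕ → ℝ) :
    (∀ j : Fin n, j.val + 1 ≤ p →
      rowSum n p φ j = phiAtOne p φ ^ 2 - kappa p φ (j.val + 1) - epsilonSum p φ (j.val + 1)) ∧
    (∀ j : Fin n, p < j.val + 1 → j.val + 1 ≤ n - p →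
      rowSum n p φ j = phiAtOne p φ ^ 2) ∧
    (∀ j j' : Fin n, n - p < j.val + 1 → j'.val + 1 = n + 1 - (j.val + 1) →
      rowSum n p φ j = rowSum n p φ j') :=
  rowSum_zindeWalsh_general p n hn φ
end

section
/- Let γ : ℕ → ℝ be extended to negative indices by γ_{−k} = γ_k, and suppose γ satisfies the autoregressive recursions γ_k = Σ_{j=1}^{p} φ_j γ_{k−j} for all integers k ≥ 1 together with the unit-innovation-variance normalization γ₀ − Σ_{j=1}^{p} φ_j γ_j = 1. For each m ≥ 1 let T_m be the m×m symmetric Toeplitz matrix with (i,j)-entry γ_{|i−j|}, and suppose T_n is positive definite. Then for every m with p ≤ m ≤ n, det(T_m) = det(T_p). In particular the determinant term g_p = det(Γ_n σ_a^{−2}) in the AR(p) Gaussian log-likelihood equals det(Γ_p σ_a^{−2}) and does not depend on n. -/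
open Matrix Finset

/-- The `m×m` symmetric Toeplitz matrix with `(i,j)`-entry `γ_{|i−j|}`. -/
noncomputable def toeplitzCov (γ : ℕ → ℝ) (m : ℕ) : Matrix (Fin m) (Fin m) ℝ :=
  Matrix.of fun i j => γ (Nat.dist i.val j.val)

lemma natDist_eq_intNatAbs (a b : ℕ) : Nat.dist a b = ((a : ℤ) - b).natAbs := by
  simp [Nat.dist]; omega

/-- Key step: one-step stabilization of the Toeplitz determinant. -/
lemma toeplitz_det_step (p : ℕ) (hp : 1 ≤ p) (φ γ : ℕ → ℝ)
    (hrec : ∀ k : ℤ, 1 ≤ k →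
      γ k.natAbs = ∑ j ∈ Finset.Icc 1 p, φ j * γ (k - (j : ℤ)).natAbs)
    (hnorm : γ 0 - ∑ j ∈ Finset.Icc 1 p, φ j * γ j = 1)
    (m : ℕ) (hm : p ≤ m) :
    (toeplitzCov γ (m + 1)).det = (toeplitzCov γ m).det := by
  set M := toeplitzCov γ (m + 1) with hM
  set last : Fin (m + 1) := Fin.last m with hlast
  -- index map j ↦ m - j
  have hidx : ∀ j ∈ Finset.Icc 1 p, m - j < m + 1 := by
    intro j hj; omega
  set idx : ℕ → Fin (m + 1) := fun j => ⟨m - j, by omega⟩ with hidxdef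
  set s : Finset (Fin (m + 1)) := (Finset.Icc 1 p).image idx with hs
  set c : Fin (m + 1) → ℝ := fun i => -φ (m - i.val) with hc
  have hinj : ∀ j ∈ Finset.Icc 1 p, ∀ j' ∈ Finset.Icc 1 p, idx j = idx j' → j = j' := by
    intro j hj j' hj' h
    simp only [idx, Fin.mk.injEq] at h
    simp only [Finset.mem_Icc] at hj hj'
    omega
  have hlast_not : last ∉ s := by
    simp only [hs, Finset.mem_image]
    rintro ⟨j, hj, h⟩
    simp only [Finset.mem_Icc] at hj
    have := congrArg Fin.val h
    simp only [idx, hlast, Fin.val_last] at this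
    omega
  -- the row-reduced matrix
  set B : Matrix (Fin (m + 1)) (Fin (m + 1)) ℝ :=
    M.updateRow last ((1 : ℝ) • M last + ∑ k ∈ s, c k • M k) with hB
  have hdetB : B.det = M.det := by
    rw [hB, Matrix.det_updateRow_sum_aux M s hlast_not c 1, one_smul]
  -- compute the new last row
  have hrow : ∀ col : Fin (m + 1),
      B last col = if col = last then 1 else 0 := by
    intro col
    have hBrow : B last col = M last col + ∑ k ∈ s, c k • M k col := by
      simp [hB, Matrix.updateRow_apply]
    have hsum : ∑ k ∈ s, c k • M k col
        = -∑ j ∈ Finset.Icc 1 p, φ j * M (idx j) col := by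
      rw [hs, Finset.sum_image hinj, ← Finset.sum_neg_distrib]
      refine Finset.sum_congr rfl fun j hj => ?_
      simp only [Finset.mem_Icc] at hj
      have : m - (m - j) = j := by omega
      simp [hc, idx, this, smul_eq_mul, neg_mul]
    rw [hBrow, hsum]
    by_cases hcol : col = last
    · subst hcol
      have h1 : M last last = γ 0 := by
        simp [hM, toeplitzCov, hlast, Nat.dist_self]
      have h2 : ∀ j ∈ Finset.Icc 1 p, M (idx j) last = γ j := by
        intro j hj
        simp only [Finset.mem_Icc] at hj
        have : Nat.dist (m - j) m = j := by
          rw [Nat.dist_eq_sub_of_le (by omega)]; omega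
        simp [hM, toeplitzCov, idx, hlast, this]
      rw [h1, Finset.sum_congr rfl fun j hj => by rw [h2 j hj], if_pos rfl]
      linarith [hnorm]
    · -- col.val < m, use the recursion
      have hcv : col.val < m := by
        have := col.isLt
        have : col.val ≠ m := fun h => hcol (Fin.ext (by simp [hlast, h]))
        omega
      have hk : (1 : ℤ) ≤ (m : ℤ) - col.val := by omega
      have h1 : M last col = γ ((m : ℤ) - col.val).natAbs := by
        have : Nat.dist m col.val = ((m : ℤ) - col.val).natAbs := natDist_eq_intNatAbs m col.val
        simp [hM, toeplitzCov, hlast, this]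
      have h2 : ∀ j ∈ Finset.Icc 1 p, M (idx j) col
          = γ (((m : ℤ) - col.val) - (j : ℤ)).natAbs := by
        intro j hj
        simp only [Finset.mem_Icc] at hj
        have hjm : j ≤ m := le_trans hj.2 hm
        have : Nat.dist (m - j) col.val = (((m : ℤ) - col.val) - (j : ℤ)).natAbs := by
          rw [natDist_eq_intNatAbs]
          congr 1
          omega
        simp [hM, toeplitzCov, idx, this]
      rw [h1, Finset.sum_congr rfl fun j hj => by rw [h2 j hj], if_neg hcol]
      rw [hrec ((m : ℤ) - col.val) hk]
      ring
  -- now expand det B along the last row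
  have hminor : B.submatrix last.succAbove last.succAbove = toeplitzCov γ m := by
    ext a b
    have ha : (last.succAbove a) ≠ last := Fin.succAbove_ne last a
    simp only [Matrix.submatrix_apply, hB]
    rw [Matrix.updateRow_ne ha]
    simp [hM, toeplitzCov, hlast, Fin.succAbove_last, Fin.coe_castSucc]
  have hexp : B.det = (toeplitzCov γ m).det := by
    rw [Matrix.det_succ_row B last]
    rw [Finset.sum_eq_single last]
    · rw [hrow last, if_pos rfl, hminor]
      simp only [hlast, Fin.val_last, one_mul, mul_one, pow_add]
      rw [← mul_pow]
      norm_num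
    · intro b _ hb
      rw [hrow b, if_neg hb]
      ring
    · intro h; exact absurd (Finset.mem_univ last) h
  rw [← hdetB, hexp]

/-- Suppose `γ` (extended symmetrically to negative indices) satisfies the
Yule–Walker recursions `γ_k = Σ_{j=1}^{p} φ_j γ_{k−j}` for all integers `k ≥ 1`
together with the unit-innovation-variance normalization
`γ₀ − Σ_{j=1}^{p} φ_j γ_j = 1`, and that the `n×n` Toeplitz covariance matrix
`T_n` is positive definite.  Then `det(T_m) = det(T_p)` for every `p ≤ m ≤ n`:
the determinant term `g_p` of the AR(p) Gaussian log-likelihood does not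
depend on `n`. -/
theorem toeplitz_det_stabilizes (p n : ℕ) (hp : 1 ≤ p) (hpn : p ≤ n)
    (φ γ : ℕ → ℝ)
    (hrec : ∀ k : ℤ, 1 ≤ k →
      γ k.natAbs = ∑ j ∈ Finset.Icc 1 p, φ j * γ (k - (j : ℤ)).natAbs)
    (hnorm : γ 0 - ∑ j ∈ Finset.Icc 1 p, φ j * γ j = 1)
    (hpd : (toeplitzCov γ n).PosDef) :
    ∀ m : ℕ, p ≤ m → m ≤ n → (toeplitzCov γ m).det = (toeplitzCov γ p).det := by
  intro m hpm hmn
  induction m, hpm using Nat.le_induction with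
  | base => rfl
  | succ m hm ih =>
    rw [toeplitz_det_step p hp φ γ hrec hnorm m hm]
    exact ih (by omega)
end

section
/- Let γ : ℕ → ℝ and for each m ≥ 1 let T_m be the m×m symmetric Toeplitz matrix with (i,j)-entry γ_{|i−j|}; assume T_n is positive definite. Define the Durbin–Levinson quantities recursively: v₀ = γ₀; ζ₁ = γ₁/γ₀; φ_{1,1} = ζ₁; and for 1 ≤ k ≤ n−2, v_k = v_{k−1}(1 − ζ_k²), ζ_{k+1} = (γ_{k+1} − Σ_{j=1}^{k} φ_{k,j} γ_{k+1−j}) / v_k, φ_{k+1,k+1} = ζ_{k+1}, and φ_{k+1,j} = φ_{k,j} − ζ_{k+1} φ_{k,k+1−j} for 1 ≤ j ≤ k. Then all the v_k are positive, |ζ_k| < 1 for 1 ≤ k ≤ n−1, and det(T_n) = Π_{k=0}^{n−1} v_k = γ₀ⁿ · Π_{k=1}^{n−1} (1 − ζ_k²)^{n−k}. -/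
/-
Bordering `T_m` by the new lag in front gives `T_{m+1} = [[γ₀, bᵀ], [b, T_m]]` with
`b = (γ₁, …, γ_m)`. If `T_m φ = b` (the order-`m` Yule–Walker equations), subtracting the
`φ`-combination of the last `m` columns from the first one shows
`det T_{m+1} = det T_m · (γ₀ - Σ_j φ_j γ_j)`. Since `T_m` commutes with reversing the order of
the indices, the reversed solution solves the system with right-hand side `γ_{m+1-i}`, and this
is exactly what makes the Durbin–Levinson update `φ_{m+1}` solve the order-`m+1` equations with
`v_{m+1} = γ₀ - Σ_j φ_{m+1,j} γ_j = v_m (1 - ζ_{m+1}²)`. Hence `det T_{m+1} = det T_m · v_m`;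
positivity of the leading minors of `T_n` gives `v_m > 0` and `|ζ_m| < 1`, and unrolling
`v_k = γ₀ Π_{j ≤ k} (1 - ζ_j²)` gives the closed form.
-/

open Matrix Finset

theorem Matrix.det_fromBlocks_replicate_of_mulVec_eq {R m : Type*} [CommRing R] [Fintype m]
    [DecidableEq m] (a : R) (b c x : m → R) (D : Matrix m m R) (hx : D *ᵥ x = b) :
    (fromBlocks (of fun _ _ => a : Matrix (Fin 1) (Fin 1) R) (replicateRow (Fin 1) c)
      (replicateCol (Fin 1) b) D).det = D.det * (a - c ⬝ᵥ x) := by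
  have hcol : fromBlocks (of fun _ _ => a : Matrix (Fin 1) (Fin 1) R) (replicateRow (Fin 1) c)
      (replicateCol (Fin 1) b) D * fromBlocks 1 0 (-replicateCol (Fin 1) x) 1 =
      fromBlocks (of fun _ _ => a - c ⬝ᵥ x) (replicateRow (Fin 1) c) 0 D := by
    rw [fromBlocks_multiply]
    congr 1
    · ext; simp [replicateRow_mul_replicateCol, sub_eq_add_neg]
    · simp
    · rw [Matrix.mul_neg, ← replicateCol_mulVec, hx]; simp
    · simp
  simpa [det_mul, mul_comm] using congrArg det hcol

theorem Finset.sum_Icc_one_eq_sum_fin {M : Type*} [AddCommMonoid M] (f : ℕ → M) (m : ℕ) :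
    ∑ j ∈ Icc 1 m, f j = ∑ i : Fin m, f (i + 1) := by
  induction m with
  | zero => simp
  | succ m ih => rw [sum_Icc_succ_top (by omega), ih, Fin.sum_univ_castSucc]; simp

theorem Finset.sum_Icc_one_reflect {M : Type*} [AddCommMonoid M] (f : ℕ → ℕ → M) (m : ℕ) :
    ∑ j ∈ Icc 1 m, f (m + 1 - j) j = ∑ j ∈ Icc 1 m, f j (m + 1 - j) := by
  refine sum_bij' (fun j _ => m + 1 - j) (fun j _ => m + 1 - j) ?_ ?_ ?_ ?_ ?_
  all_goals intro j hj; simp only [mem_Icc] at hj ⊢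
  any_goals omega
  rw [Nat.sub_sub_self (by omega)]

theorem eq_prod_range_of_succ_eq_mul {M : Type*} [CommMonoid M] {s f : ℕ → M} {n : ℕ}
    (h0 : s 0 = 1) (hs : ∀ m < n, s (m + 1) = s m * f m) : s n = ∏ k ∈ range n, f k := by
  induction n with
  | zero => simpa using h0
  | succ n ih => rw [hs n n.lt_succ_self, ih fun m hm => hs m (by omega), prod_range_succ]

theorem prod_range_prod_Icc_one {M : Type*} [CommMonoid M] (c : ℕ → M) (n : ℕ) :
    ∏ k ∈ range n, ∏ j ∈ Icc 1 k, c j = ∏ j ∈ Icc 1 (n - 1), c j ^ (n - j) := by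
  rw [prod_comm' (t' := Icc 1 (n - 1)) (s' := fun j => Ico j n)
    (by intro k j; simp only [mem_range, mem_Icc, mem_Ico]; omega)]
  exact prod_congr rfl fun j _ => by rw [prod_const, Nat.card_Ico]

theorem prod_range_eq_pow_mul_prod_Icc {M : Type*} [CommMonoid M] {v c : ℕ → M} {n : ℕ}
    (hv : ∀ k, 1 ≤ k → k ≤ n - 1 → v k = v (k - 1) * c k) :
    ∏ k ∈ range n, v k = v 0 ^ n * ∏ k ∈ Icc 1 (n - 1), c k ^ (n - k) := by
  have hclosed : ∀ k ≤ n - 1, v k = v 0 * ∏ j ∈ Icc 1 k, c j := by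
    intro k hk
    induction k with
    | zero => simp
    | succ k ih => rw [hv (k + 1) (by omega) hk, Nat.add_sub_cancel, ih (by omega),
        prod_Icc_succ_top (by omega), mul_assoc]
  rw [prod_congr rfl fun k hk => hclosed k (by rw [mem_range] at hk; omega), prod_mul_distrib,
    prod_const, card_range, prod_range_prod_Icc_one]

def finOneSumEquiv (m : ℕ) : Fin 1 ⊕ Fin m ≃ Fin (m + 1) :=
  finSumFinEquiv.trans (finCongr (add_comm 1 m))

theorem toeplitzCov_posDef_of_le {γ : ℕ → ℝ} {m n : ℕ} (h : m ≤ n)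
    (hpd : (toeplitzCov γ n).PosDef) : (toeplitzCov γ m).PosDef :=
  hpd.submatrix (Fin.castLE_injective h)

theorem toeplitzCov_succ_submatrix (γ : ℕ → ℝ) (m : ℕ) :
    (toeplitzCov γ (m + 1)).submatrix (finOneSumEquiv m) (finOneSumEquiv m) =
      fromBlocks (of fun _ _ => γ 0) (replicateRow (Fin 1) fun j : Fin m => γ (j + 1))
        (replicateCol (Fin 1) fun i : Fin m => γ (i + 1)) (toeplitzCov γ m) := by
  ext (i | i) (j | j) <;>
    simp [finOneSumEquiv, toeplitzCov, Nat.dist_zero_left, Nat.dist_zero_right,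
      Nat.dist_add_add_right]

theorem det_toeplitzCov_succ {γ : ℕ → ℝ} {m : ℕ} {x : Fin m → ℝ}
    (hx : toeplitzCov γ m *ᵥ x = fun i : Fin m => γ (i + 1)) :
    (toeplitzCov γ (m + 1)).det =
      (toeplitzCov γ m).det * (γ 0 - ∑ i : Fin m, γ (i + 1) * x i) := by
  rw [← det_submatrix_equiv_self (finOneSumEquiv m), toeplitzCov_succ_submatrix,
    det_fromBlocks_replicate_of_mulVec_eq _ _ _ _ _ hx, dotProduct]

section YuleWalker

variable {R : Type*} [CommRing R] {γ a a' : ℕ → R} {m : ℕ} {κ : R}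

/-- With `γ` the autocovariances of a stationary process, a solution `a` gives the coefficients
`a 1, …, a m` of the best linear predictor of `X_t` from `X_{t-1}, …, X_{t-m}`, and
`predictionError γ m a` is its mean squared error. -/
def YuleWalker (γ : ℕ → R) (m : ℕ) (a : ℕ → R) : Prop :=
  ∀ i ∈ Icc 1 m, ∑ j ∈ Icc 1 m, a j * γ (Nat.dist i j) = γ i

def predictionError (γ : ℕ → R) (m : ℕ) (a : ℕ → R) : R :=
  γ 0 - ∑ j ∈ Icc 1 m, a j * γ j

theorem yuleWalker_zero (γ a : ℕ → R) : YuleWalker γ 0 a := by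
  simp [YuleWalker]

theorem predictionError_zero (γ a : ℕ → R) : predictionError γ 0 a = γ 0 := by
  simp [predictionError]

theorem sum_Icc_succ_mul_of_levinson (htop : a' (m + 1) = κ)
    (hupd : ∀ j ∈ Icc 1 m, a' j = a j - κ * a (m + 1 - j)) (g : ℕ → R) :
    ∑ j ∈ Icc 1 (m + 1), a' j * g j =
      ∑ j ∈ Icc 1 m, a j * g j - κ * ∑ j ∈ Icc 1 m, a j * g (m + 1 - j) + κ * g (m + 1) := by
  rw [sum_Icc_succ_top (by omega), htop, sum_congr rfl fun j hj => by rw [hupd j hj],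
    ← sum_Icc_one_reflect (fun i j => a i * g j), mul_sum, ← sum_sub_distrib]
  congr 1
  exact sum_congr rfl fun j _ => by ring

theorem predictionError_levinson
    (hκ : κ * predictionError γ m a = γ (m + 1) - ∑ j ∈ Icc 1 m, a j * γ (m + 1 - j))
    (htop : a' (m + 1) = κ) (hupd : ∀ j ∈ Icc 1 m, a' j = a j - κ * a (m + 1 - j)) :
    predictionError γ (m + 1) a' = predictionError γ m a * (1 - κ ^ 2) := by
  unfold predictionError at hκ ⊢
  rw [sum_Icc_succ_mul_of_levinson htop hupd]
  linear_combination κ * hκ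

theorem YuleWalker.levinson (ha : YuleWalker γ m a)
    (hκ : κ * predictionError γ m a = γ (m + 1) - ∑ j ∈ Icc 1 m, a j * γ (m + 1 - j))
    (htop : a' (m + 1) = κ) (hupd : ∀ j ∈ Icc 1 m, a' j = a j - κ * a (m + 1 - j)) :
    YuleWalker γ (m + 1) a' := by
  intro i hi
  rw [mem_Icc] at hi
  have hrefl : ∑ j ∈ Icc 1 m, a j * γ (Nat.dist i (m + 1 - j)) =
      ∑ j ∈ Icc 1 m, a j * γ (Nat.dist (m + 1 - i) j) :=
    sum_congr rfl fun j hj => by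
      rw [mem_Icc] at hj
      congr 2
      simp only [Nat.dist]
      omega
  rw [sum_Icc_succ_mul_of_levinson htop hupd, hrefl]
  rcases hi.2.lt_or_eq with hi' | rfl
  · rw [ha i (mem_Icc.2 ⟨hi.1, by omega⟩), ha (m + 1 - i) (mem_Icc.2 ⟨by omega, by omega⟩),
      Nat.dist_eq_sub_of_le hi.2]
    ring
  · have hdist : ∀ j ∈ Icc 1 m, Nat.dist (m + 1) j = m + 1 - j := fun j hj =>
      Nat.dist_eq_sub_of_le_right (by rw [mem_Icc] at hj; omega)
    rw [sum_congr rfl fun j hj => by rw [hdist j hj], Nat.sub_self, Nat.dist_self]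
    simp only [Nat.dist_zero_left]
    unfold predictionError at hκ
    linear_combination hκ

end YuleWalker

theorem YuleWalker.toeplitzCov_mulVec {γ a : ℕ → ℝ} {m : ℕ} (ha : YuleWalker γ m a) :
    toeplitzCov γ m *ᵥ (fun i => a (i + 1)) = fun i : Fin m => γ (i + 1) := by
  funext i
  rw [← ha (i + 1) (mem_Icc.2 ⟨by omega, by omega⟩), sum_Icc_one_eq_sum_fin]
  simp only [mulVec, dotProduct, toeplitzCov, of_apply, Nat.dist_add_add_right, mul_comm]

theorem YuleWalker.det_toeplitzCov_succ {γ a : ℕ → ℝ} {m : ℕ} (ha : YuleWalker γ m a) :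
    (toeplitzCov γ (m + 1)).det = (toeplitzCov γ m).det * predictionError γ m a := by
  rw [_root_.det_toeplitzCov_succ ha.toeplitzCov_mulVec, predictionError, sum_Icc_one_eq_sum_fin]
  simp only [mul_comm]

theorem yuleWalker_durbinLevinson {γ : ℕ → ℝ} {N : ℕ}
    (hdet : ∀ m ≤ N + 1, (toeplitzCov γ m).det ≠ 0) {v ζ : ℕ → ℝ} {φ : ℕ → ℕ → ℝ}
    (hv0 : v 0 = γ 0) (hv : ∀ k < N, v (k + 1) = v k * (1 - ζ (k + 1) ^ 2))
    (hζ : ∀ k < N, ζ (k + 1) = (γ (k + 1) - ∑ j ∈ Icc 1 k, φ k j * γ (k + 1 - j)) / v k)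
    (hφdiag : ∀ k < N, φ (k + 1) (k + 1) = ζ (k + 1))
    (hφ : ∀ k < N, ∀ j ∈ Icc 1 k, φ (k + 1) j = φ k j - ζ (k + 1) * φ k (k + 1 - j)) :
    ∀ m ≤ N, YuleWalker γ m (φ m) ∧ v m = predictionError γ m (φ m) := by
  intro m hm
  induction m with
  | zero => exact ⟨yuleWalker_zero γ _, by rw [hv0, predictionError_zero]⟩
  | succ m ih =>
    obtain ⟨hYW, hvm⟩ := ih (by omega)
    have hvm0 : v m ≠ 0 := by
      have hsucc := hYW.det_toeplitzCov_succ
      rw [← hvm] at hsucc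
      exact right_ne_zero_of_mul (hsucc ▸ hdet (m + 1) (by omega))
    have hκ : ζ (m + 1) * predictionError γ m (φ m) =
        γ (m + 1) - ∑ j ∈ Icc 1 m, φ m j * γ (m + 1 - j) := by
      rw [← hvm, hζ m (by omega), div_mul_cancel₀ _ hvm0]
    refine ⟨hYW.levinson hκ (hφdiag m (by omega)) (hφ m (by omega)), ?_⟩
    rw [hv m (by omega), hvm, predictionError_levinson hκ (hφdiag m (by omega)) (hφ m (by omega))]

/-- Durbin–Levinson recursion: with `v₀ = γ₀`, `ζ₁ = γ₁/γ₀`, `φ_{1,1} = ζ₁`,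
`v_k = v_{k−1}(1 − ζ_k²)`,
`ζ_{k+1} = (γ_{k+1} − Σ_{j=1}^{k} φ_{k,j} γ_{k+1−j})/v_k`,
`φ_{k+1,k+1} = ζ_{k+1}` and `φ_{k+1,j} = φ_{k,j} − ζ_{k+1} φ_{k,k+1−j}`,
if the `n×n` Toeplitz matrix `T_n` is positive definite then all `v_k` are
positive, the partial autocorrelations satisfy `|ζ_k| < 1` for `1 ≤ k ≤ n−1`,
and `det(T_n) = Π_{k=0}^{n−1} v_k = γ₀ⁿ · Π_{k=1}^{n−1} (1 − ζ_k²)^{n−k}`. -/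
theorem durbin_levinson_det (n : ℕ) (hn : 1 ≤ n) (γ : ℕ → ℝ)
    (hpd : (toeplitzCov γ n).PosDef)
    (v ζ : ℕ → ℝ) (φ : ℕ → ℕ → ℝ)
    (hv0 : v 0 = γ 0)
    (hζ1 : ζ 1 = γ 1 / γ 0)
    (hφ11 : φ 1 1 = ζ 1)
    (hv : ∀ k, 1 ≤ k → k ≤ n - 1 → v k = v (k - 1) * (1 - ζ k ^ 2))
    (hζ : ∀ k, 1 ≤ k → k ≤ n - 2 →
      ζ (k + 1) = (γ (k + 1) - ∑ j ∈ Finset.Icc 1 k, φ k j * γ (k + 1 - j)) / v k)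
    (hφdiag : ∀ k, 1 ≤ k → k ≤ n - 2 → φ (k + 1) (k + 1) = ζ (k + 1))
    (hφ : ∀ k, 1 ≤ k → k ≤ n - 2 → ∀ j, 1 ≤ j → j ≤ k →
      φ (k + 1) j = φ k j - ζ (k + 1) * φ k (k + 1 - j)) :
    (∀ k, k ≤ n - 1 → 0 < v k) ∧
    (∀ k, 1 ≤ k → k ≤ n - 1 → |ζ k| < 1) ∧
    (toeplitzCov γ n).det = ∏ k ∈ Finset.range n, v k ∧
    (toeplitzCov γ n).det = γ 0 ^ n * ∏ k ∈ Finset.Icc 1 (n - 1), (1 - ζ k ^ 2) ^ (n - k) := by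
  have hdet (m : ℕ) (hm : m ≤ n) : 0 < (toeplitzCov γ m).det :=
    (toeplitzCov_posDef_of_le hm hpd).det_pos
  have hDL := yuleWalker_durbinLevinson (N := n - 1) (fun m hm => (hdet m (by omega)).ne') hv0
    (fun k _ => by simpa using hv (k + 1) (by omega) (by omega))
    (fun | 0, _ => by simp [hζ1, hv0] | k + 1, _ => hζ (k + 1) (by omega) (by omega))
    (fun | 0, _ => hφ11 | k + 1, _ => hφdiag (k + 1) (by omega) (by omega))
    (fun k _ j hj => by
      obtain ⟨hj1, hjk⟩ := mem_Icc.1 hj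
      exact hφ k (by omega) (by omega) j hj1 hjk)
  have hstep (m : ℕ) (hm : m < n) :
      (toeplitzCov γ (m + 1)).det = (toeplitzCov γ m).det * v m := by
    obtain ⟨hYW, hvm⟩ := hDL m (by omega)
    rw [hYW.det_toeplitzCov_succ, hvm]
  have hvpos (k : ℕ) (hk : k ≤ n - 1) : 0 < v k :=
    pos_of_mul_pos_right (hstep k (by omega) ▸ hdet (k + 1) (by omega)) (hdet k (by omega)).le
  have hprod : (toeplitzCov γ n).det = ∏ k ∈ range n, v k :=
    eq_prod_range_of_succ_eq_mul (s := fun m => (toeplitzCov γ m).det) det_isEmpty hstep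
  refine ⟨hvpos, fun k hk1 hk => ?_, hprod, ?_⟩
  · have hpos := hv k hk1 hk ▸ hvpos k hk
    exact (sq_lt_one_iff_abs_lt_one _).mp
      (sub_pos.mp (pos_of_mul_pos_right hpos (hvpos (k - 1) (by omega)).le))
  · rw [hprod, prod_range_eq_pow_mul_prod_Icc hv, hv0]
end
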